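/- arXiv:2202.07567 — 7 statements merged into one kernel-verified Lean document; each statement's English description precedes it below -/
import Mathlib

section
/- Let G be a chordal graph that is not k-colorable. Then G contains a clique on k+1 vertices. -/
open List

namespace ChordalAux

variable {V : Type*} (G : SimpleGraph V)

/-- The chordality hypothesis. -/
def NoCyc : Prop :=
  ¬ ∃ m : ℕ, 4 ≤ m ∧ ∃ f : ZMod m → V, Function.Injective f ∧
      ∀ i j : ZMod m, G.Adj (f i) (f j) ↔ (j = i + 1 ∨ i = j + 1)

/-- Reachability within a set of vertices. -/
def Reach (W : Set V) : V → V → Prop :=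
  Relation.ReflTransGen (fun p q => p ∈ W ∧ q ∈ W ∧ G.Adj p q)

/-- A good path list from `x` to `y` inside `W`. -/
def GP (W : Set V) (x y : V) (l : List V) : Prop :=
  l.Chain' G.Adj ∧ (∀ z ∈ l, z ∈ W) ∧ ∃ h : l ≠ [], l.head h = x ∧ l.getLast h = y

/-- An induced (chordless) path list. -/
def Ind (l : List V) : Prop :=
  ∀ i j (hi : i < l.length) (hj : j < l.length), i < j → G.Adj (l[i]) (l[j]) → j = i + 1

variable {G}

lemma getElem_idx_congr {l : List V} {i j : ℕ} (h : i = j) (hi : i < l.length) :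
    l[i] = l[j]'(h ▸ hi) := by subst h; rfl

lemma no_chordless (hch : NoCyc G) (l : List V) (h4 : 4 ≤ l.length) (hnd : l.Nodup)
    (hchain : l.Chain' G.Adj)
    (hclose : ∀ (hne : l ≠ []), G.Adj (l.getLast hne) (l.head hne))
    (hchord : ∀ i j (hi : i < l.length) (hj : j < l.length), i < j → G.Adj (l[i]) (l[j]) →
      j = i + 1 ∨ (i = 0 ∧ j = l.length - 1)) : False := by
  classical
  have hne : l ≠ [] := by rintro rfl; simp at h4
  have hm0 : NeZero l.length := ⟨by omega⟩
  have hfact : Fact (1 < l.length) := ⟨by omega⟩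
  apply hch
  refine ⟨l.length, h4, fun i => l[i.val]'(ZMod.val_lt i), ?_, ?_⟩
  · intro i j hij
    exact ZMod.val_injective l.length (hnd.getElem_inj_iff.1 hij)
  · have hvadd : ∀ i : ZMod l.length, (i + 1).val = (i.val + 1) % l.length := by
      intro i
      rw [ZMod.val_add, ZMod.val_one]
    have hchainE : ∀ i (h : i + 1 < l.length), G.Adj (l[i]) (l[i+1]) := by
      intro i h
      have := List.isChain_iff_getElem.1 hchain i (by omega)
      simpa using this
    have key : ∀ i j : ZMod l.length, i.val < j.val →
        G.Adj (l[i.val]'(ZMod.val_lt i)) (l[j.val]'(ZMod.val_lt j)) →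
        (j = i + 1 ∨ i = j + 1) := by
      intro i j hlt hadj
      rcases hchord i.val j.val (ZMod.val_lt i) (ZMod.val_lt j) hlt hadj with h | ⟨h0, h1⟩
      · left
        apply ZMod.val_injective l.length
        rw [hvadd, Nat.mod_eq_of_lt (by have := ZMod.val_lt j; omega), h]
      · right
        apply ZMod.val_injective l.length
        rw [hvadd, h1, h0, Nat.sub_add_cancel (by omega), Nat.mod_self]
    have hconsec : ∀ i j : ZMod l.length, j = i + 1 →
        G.Adj (l[i.val]'(ZMod.val_lt i)) (l[j.val]'(ZMod.val_lt j)) := by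
      intro i j h
      subst h
      by_cases hlt : i.val + 1 < l.length
      · have hv : (i + 1).val = i.val + 1 := by rw [hvadd, Nat.mod_eq_of_lt hlt]
        rw [getElem_idx_congr hv (ZMod.val_lt (i+1))]
        exact hchainE i.val hlt
      · have him : i.val = l.length - 1 := by have := ZMod.val_lt i; omega
        have hv : (i + 1).val = 0 := by
          rw [hvadd, him, Nat.sub_add_cancel (by omega), Nat.mod_self]
        rw [getElem_idx_congr hv (ZMod.val_lt (i+1)),
          getElem_idx_congr him (ZMod.val_lt i)]
        have h2 := hclose hne
        rw [List.getLast_eq_getElem, List.head_eq_getElem_zero] at h2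
        exact h2
    intro i j
    constructor
    · intro hadj
      rcases Nat.lt_trichotomy i.val j.val with h | h | h
      · exact key i j h hadj
      · exfalso
        have : i = j := ZMod.val_injective l.length h
        subst this
        exact G.irrefl hadj
      · exact Or.symm (key j i h hadj.symm)
    · intro h
      rcases h with h | h
      · exact hconsec i j h
      · exact (hconsec j i h).symm


lemma Reach.symm {W : Set V} {u v : V} (h : Reach G W u v) : Reach G W v u :=
  by
    induction h with
    | refl => exact Relation.ReflTransGen.refl
    | tail _ h ih => exact Relation.ReflTransGen.head ⟨h.2.1, h.1, h.2.2.symm⟩ ih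

lemma Reach.trans {W : Set V} {u v w : V} (h : Reach G W u v) (h' : Reach G W v w) :
    Reach G W u w := Relation.ReflTransGen.trans h h'

lemma Reach.refl {W : Set V} {u : V} : Reach G W u u := Relation.ReflTransGen.refl

lemma Reach.mono {W W' : Set V} (hW : W ⊆ W') {u v : V} (h : Reach G W u v) :
    Reach G W' u v :=
  by
    induction h with
    | refl => exact Relation.ReflTransGen.refl
    | tail _ h ih => exact Relation.ReflTransGen.tail ih ⟨hW h.1, hW h.2.1, h.2.2⟩

lemma Reach.mem_right {W : Set V} {u v : V} (h : Reach G W u v) (hu : u ∈ W) : v ∈ W := by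
  induction h with
  | refl => exact hu
  | tail _ h ih => exact h.2.1

/-- Extract a path list from reachability. -/
lemma Reach.toList {W : Set V} {u v : V} (h : Reach G W u v) :
    ∃ l : List V, l.Chain' G.Adj ∧ (∀ z ∈ l, z = u ∨ (z ∈ W ∧ Reach G W u z)) ∧
      ∃ hne : l ≠ [], l.head hne = u ∧ l.getLast hne = v := by
  induction h using Relation.ReflTransGen.head_induction_on with
  | refl => exact ⟨[v], List.isChain_singleton _, by simp, by simp⟩
  | head hr hrest ih =>
    rename_i p q
    obtain ⟨l, hchain, hmem, hne, hhead, hlast⟩ := ih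
    refine ⟨p :: l, ?_, ?_, by simp, by simp, ?_⟩
    · refine List.isChain_cons.2 ⟨?_, hchain⟩
      intro z hz
      rw [List.head?_eq_head hne] at hz
      simp at hz
      rw [← hz, hhead]
      exact hr.2.2
    · intro z hz
      rcases List.mem_cons.1 hz with rfl | hz
      · exact Or.inl rfl
      · rcases hmem z hz with rfl | ⟨h1, h2⟩
        · exact Or.inr ⟨hr.2.1, Relation.ReflTransGen.single hr⟩
        · exact Or.inr ⟨h1, Relation.ReflTransGen.head hr h2⟩
    · rw [List.getLast_cons hne]
      exact hlast

/-- Build a good path from x to y through component X. -/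
lemma build_gp {W : Set V} {x y u u' : V} (hxy : x ≠ y)
    (hxu : G.Adj x u) (hyu : G.Adj y u')
    (hu : u ∈ W) (hu' : u' ∈ W)
    (hreach : Reach G W u u')
    (hW : ∀ z ∈ W, Reach G W u z → z ∈ W) :
    ∃ l, GP G (insert x (insert y W)) x y l := by
  obtain ⟨l, hchain, hmem, hne, hhead, hlast⟩ := hreach.toList
  refine ⟨x :: (l ++ [y]), ?_, ?_, by simp, by simp, ?_⟩
  · refine List.isChain_cons.2 ⟨?_, ?_⟩
    · intro z hz
      have hne2 : l ++ [y] ≠ [] := by simp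
      rw [List.head?_eq_head hne2] at hz
      simp at hz
      rw [← hz, List.head_append_of_ne_nil hne, hhead]
      exact hxu
    · refine List.IsChain.append hchain (by simp) ?_
      intro a ha b hb
      rw [List.getLast?_eq_getLast_of_ne_nil hne] at ha
      simp at ha hb
      rw [← ha, ← hb, hlast]
      exact hyu.symm
  · intro z hz
    simp only [List.mem_cons, List.mem_append, List.mem_singleton] at hz
    rcases hz with rfl | hz | hz
    · exact Set.mem_insert _ _
    · rcases hmem z hz with rfl | ⟨h1, _⟩
      · exact Set.mem_insert_iff.2 (Or.inr (Set.mem_insert_iff.2 (Or.inr hu)))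
      · exact Set.mem_insert_iff.2 (Or.inr (Set.mem_insert_iff.2 (Or.inr h1)))
    · simp at hz
      subst hz
      exact Set.mem_insert_iff.2 (Or.inr (Set.mem_insert _ _))
  · rw [List.getLast_cons (by simp)]
    simp


lemma GP.three {W : Set V} {x y : V} {l : List V} (hgp : GP G W x y l) (hxy : x ≠ y)
    (hnadj : ¬ G.Adj x y) : 3 ≤ l.length := by
  obtain ⟨hchain, hmem, hne, hhead, hlast⟩ := hgp
  match l with
  | [] => exact absurd rfl hne
  | [a] => simp at hhead hlast; exact absurd (hhead.symm.trans hlast) hxy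
  | [a, b] =>
    simp [List.getLast] at hhead hlast
    rw [List.Chain', List.isChain_pair] at hchain
    rw [hhead, hlast] at hchain
    exact absurd hchain hnadj
  | a :: b :: c :: t => simp

lemma cut1 {W : Set V} {x y : V} {l : List V} (hgp : GP G W x y l) (i j : ℕ)
    (hi : i < l.length) (hj : j < l.length) (hij : i + 1 < j)
    (hadj : G.Adj (l[i]) (l[j])) :
    ∃ l', GP G W x y l' ∧ l'.length < l.length := by
  obtain ⟨hchain, hmem, hne, hhead, hlast⟩ := hgp
  have htake_ne : l.take (i+1) ≠ [] := by
    apply List.ne_nil_of_length_pos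
    simp [List.length_take]; omega
  have hdrop_ne : l.drop j ≠ [] := by
    apply List.ne_nil_of_length_pos
    simp [List.length_drop]; omega
  refine ⟨l.take (i+1) ++ l.drop j, ⟨?_, ?_, by simp [htake_ne], ?_, ?_⟩, ?_⟩
  · refine List.IsChain.append (hchain.take _) (hchain.drop _) ?_
    intro a ha b hb
    rw [List.getLast?_eq_getLast_of_ne_nil htake_ne] at ha
    rw [List.head?_drop, List.getElem?_eq_getElem hj] at hb
    simp at ha hb
    have hlt : (l.take (i+1)).getLast htake_ne = l[i] := by
      rw [List.getLast_eq_getElem, List.getElem_take]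
      exact getElem_idx_congr (by simp [List.length_take]; omega) (by simp [List.length_take]; omega)
    rw [← ha, ← hb, hlt]
    exact hadj
  · intro z hz
    rcases List.mem_append.1 hz with hz | hz
    · exact hmem z (List.take_subset _ _ hz)
    · exact hmem z (List.drop_subset _ _ hz)
  · rw [List.head_append_of_ne_nil htake_ne, List.head_take]
    exact hhead
  · rw [List.getLast_append_of_ne_nil _ hdrop_ne, List.getLast_drop]
    exact hlast
  · simp [List.length_take, List.length_drop]; omega

lemma cut2 {W : Set V} {x y : V} {l : List V} (hgp : GP G W x y l) (i : ℕ)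
    (hi : i + 1 < l.length) (hiy : l[i] = y) :
    ∃ l', GP G W x y l' ∧ l'.length < l.length := by
  obtain ⟨hchain, hmem, hne, hhead, hlast⟩ := hgp
  have htake_ne : l.take (i+1) ≠ [] := by
    apply List.ne_nil_of_length_pos
    simp [List.length_take]; omega
  refine ⟨l.take (i+1), ⟨hchain.take _, ?_, htake_ne, ?_, ?_⟩, ?_⟩
  · intro z hz; exact hmem z (List.take_subset _ _ hz)
  · rw [List.head_take]; exact hhead
  · rw [List.getLast_eq_getElem, List.getElem_take]
    rw [getElem_idx_congr (show (l.take (i+1)).length - 1 = i by simp [List.length_take]; omega)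
      (by simp [List.length_take]; omega)]
    exact hiy
  · simp [List.length_take]; omega

lemma exists_min_path {W : Set V} {x y : V} :
    ∀ n (l : List V), l.length ≤ n → GP G W x y l →
    ∃ l', GP G W x y l' ∧ l'.Nodup ∧ Ind G l' := by
  intro n
  induction n with
  | zero =>
    intro l hl hgp
    obtain ⟨_, _, hne, _⟩ := hgp
    exact absurd (List.length_eq_zero_iff.1 (by omega)) hne
  | succ n ih =>
    intro l hlen hgp
    by_cases hnd : l.Nodup
    · by_cases hind : Ind G l
      · exact ⟨l, hgp, hnd, hind⟩
      · simp only [Ind] at hind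
        push_neg at hind
        obtain ⟨i, j, hi, hj, hij, hadj, hne1⟩ := hind
        have hij2 : i + 1 < j := by omega
        obtain ⟨l', hgp', hlt⟩ := cut1 hgp i j hi hj hij2 hadj
        exact ih l' (by omega) hgp'
    · rw [List.nodup_iff_injective_get] at hnd
      simp only [Function.Injective] at hnd
      push_neg at hnd
      obtain ⟨⟨i, hi⟩, ⟨j, hj⟩, heq, hneq⟩ := hnd
      simp only [List.get_eq_getElem] at heq
      have hne2 : i ≠ j := by simpa using Fin.val_ne_of_ne hneq
      -- wlog i < j
      rcases Nat.lt_or_ge i j with hij | hij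
      · rcases Nat.lt_or_ge (j+1) l.length with hj1 | hj1
        · have hadj : G.Adj (l[i]) (l[j+1]) := by
            rw [heq]
            have := List.isChain_iff_getElem.1 hgp.1 j (by omega)
            simpa using this
          obtain ⟨l', hgp', hlt⟩ := cut1 hgp i (j+1) hi hj1 (by omega) hadj
          exact ih l' (by omega) hgp'
        · have hjlast : j = l.length - 1 := by omega
          have hiy : l[i] = y := by
            rw [heq]
            obtain ⟨_, _, hne, _, hlast⟩ := hgp
            rw [← hlast, List.getLast_eq_getElem]
            exact getElem_idx_congr hjlast hj
          obtain ⟨l', hgp', hlt⟩ := cut2 hgp i (by omega) hiy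
          exact ih l' (by omega) hgp'
      · have hij' : j < i := by omega
        rcases Nat.lt_or_ge (i+1) l.length with hi1 | hi1
        · have hadj : G.Adj (l[j]) (l[i+1]) := by
            rw [← heq]
            have := List.isChain_iff_getElem.1 hgp.1 i (by omega)
            simpa using this
          obtain ⟨l', hgp', hlt⟩ := cut1 hgp j (i+1) hj hi1 (by omega) hadj
          exact ih l' (by omega) hgp'
        · have hilast : i = l.length - 1 := by omega
          have hiy : l[j] = y := by
            rw [← heq]
            obtain ⟨_, _, hne, _, hlast⟩ := hgp
            rw [← hlast, List.getLast_eq_getElem]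
            exact getElem_idx_congr hilast hi
          obtain ⟨l', hgp', hlt⟩ := cut2 hgp j (by omega) hiy
          exact ih l' (by omega) hgp'


lemma cycle_contradiction (hch : NoCyc G) {X Y : Set V} {x y : V}
    (hxy : x ≠ y) (hnadj : ¬ G.Adj x y)
    (hxX : x ∉ X) (hyX : y ∉ X) (hxY : x ∉ Y) (hyY : y ∉ Y)
    (hXY : ∀ z, z ∈ X → z ∈ Y → False)
    (hnoedge : ∀ u ∈ X, ∀ w ∈ Y, ¬ G.Adj u w)
    {pA pB : List V}
    (hgpA : GP G (insert x (insert y X)) x y pA) (hndA : pA.Nodup) (hindA : Ind G pA)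
    (hgpB : GP G (insert x (insert y Y)) x y pB) (hndB : pB.Nodup) (hindB : Ind G pB) :
    False := by
  classical
  obtain ⟨hchainA, hmemA, hneA, hheadA, hlastA⟩ := hgpA
  obtain ⟨hchainB, hmemB, hneB, hheadB, hlastB⟩ := hgpB
  have hp3 : 3 ≤ pA.length := GP.three ⟨hchainA, hmemA, hneA, hheadA, hlastA⟩ hxy hnadj
  have hpB3 : 3 ≤ pB.length := GP.three ⟨hchainB, hmemB, hneB, hheadB, hlastB⟩ hxy hnadj
  set p := pA.length with hp
  set mB := pB.tail.dropLast with hmB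
  have hq : mB.length = pB.length - 2 := by
    simp [hmB, List.length_dropLast, List.length_tail]
    omega
  set q := mB.length with hqd
  have hmBlen : pB.tail.dropLast.length = q := hqd.symm
  have hplenB : pB.length = q + 2 := by omega
  have hq1 : 1 ≤ q := by omega
  -- getElem facts
  have hA0 : pA[0]'(by omega) = x := by
    rw [← List.head_eq_getElem_zero hneA]; exact hheadA
  have hAlast : pA[p - 1]'(by omega) = y := by
    rw [← List.getLast_eq_getElem hneA]; exact hlastA
  have hB0 : pB[0]'(by omega) = x := by
    rw [← List.head_eq_getElem_zero hneB]; exact hheadB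
  have hBlast : pB[q + 1]'(by omega) = y := by
    rw [getElem_idx_congr (show q + 1 = pB.length - 1 by omega) (by omega),
      ← List.getLast_eq_getElem hneB]
    exact hlastB
  have hmBt : ∀ t (h : t < q), mB[t] = pB[t + 1]'(by omega) := by
    intro t h
    exact (List.getElem_dropLast (xs := pB.tail) (i := t) (by omega)).trans
      (List.getElem_tail (l := pB) (i := t) (by simp [List.length_tail]; omega))
  have hBcons : ∀ t (h : t + 1 < pB.length), G.Adj (pB[t]) (pB[t+1]) := by
    intro t h
    have := List.isChain_iff_getElem.1 hchainB t (by omega)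
    simpa using this
  have hAcons : ∀ t (h : t + 1 < p), G.Adj (pA[t]) (pA[t+1]) := by
    intro t h
    have := List.isChain_iff_getElem.1 hchainA t (by omega)
    simpa using this
  -- membership of interior of pB
  have hmemY : ∀ t (h1 : 1 ≤ t) (h2 : t ≤ q), pB[t]'(by omega) ∈ Y := by
    intro t h1 h2
    have hmem : pB[t]'(by omega) ∈ insert x (insert y Y) :=
      hmemB _ (List.getElem_mem _)
    have hne0 : pB[t]'(by omega) ≠ x := by
      rw [← hB0]
      intro h
      have := hndB.getElem_inj_iff.1 h
      omega
    have hne1 : pB[t]'(by omega) ≠ y := by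
      rw [← hBlast]
      intro h
      have := hndB.getElem_inj_iff.1 h
      omega
    rcases hmem with h | h | h
    · exact absurd h hne0
    · exact absurd h hne1
    · exact h
  -- the cycle
  have hmBrev_ne : mB.reverse ≠ [] := by
    apply List.ne_nil_of_length_pos
    simp only [List.length_reverse]
    omega
  have hlen : (pA ++ mB.reverse).length = p + q := by
    simp [List.length_append, List.length_reverse]; rfl
  have hgetA : ∀ i (h1 : i < p) (h2 : i < (pA ++ mB.reverse).length),
      (pA ++ mB.reverse)[i] = pA[i] :=
    fun i h1 h2 => List.getElem_append_left h1
  have hgetB : ∀ j (h1 : p ≤ j) (h2 : j < (pA ++ mB.reverse).length),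
      (pA ++ mB.reverse)[j] = pB[q - (j - p)]'(by omega) := by
    intro j h1 h2
    have h3 : j - p < q := by omega
    rw [List.getElem_append_right (by exact h1), List.getElem_reverse]
    calc mB[mB.length - 1 - (j - pA.length)]'(by simp [List.length_reverse] at h2 ⊢; omega)
        = mB[q - 1 - (j - p)]'(by omega) := getElem_idx_congr (by omega) _
      _ = pB[q - 1 - (j - p) + 1]'(by omega) := hmBt _ (by omega)
      _ = pB[q - (j - p)]'(by omega) := getElem_idx_congr (by omega) _
  apply no_chordless hch (pA ++ mB.reverse) (by omega) ?nodup ?chain ?close ?chord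
  case nodup =>
    refine List.Nodup.append hndA (List.nodup_reverse.2 ?_) ?_
    · exact (pB.tail.dropLast_sublist.trans pB.tail_sublist).nodup hndB
    · intro a haA haB
      rw [List.mem_reverse] at haB
      obtain ⟨t, ht, rfl⟩ := List.mem_iff_getElem.1 haB
      rw [hmBt t (by omega)] at haA
      have hY : pB[t+1]'(by omega) ∈ Y := hmemY (t+1) (by omega) (by omega)
      rcases hmemA _ haA with h | h | h
      · rw [h] at hY; exact hxY hY
      · rw [h] at hY; exact hyY hY
      · exact hXY _ h hY
  case chain =>
    refine List.IsChain.append hchainA ?_ ?_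
    · rw [List.isChain_reverse]
      exact (hchainB.tail.dropLast).imp (fun _ _ h => h.symm)
    · intro a ha b hb
      rw [List.getLast?_eq_getLast_of_ne_nil hneA] at ha
      rw [List.head?_eq_head hmBrev_ne] at hb
      simp only [Option.mem_some_iff] at ha hb
      rw [← ha, ← hb, hlastA, List.head_reverse]
      have : mB.getLast (by apply List.ne_nil_of_length_pos; omega) = pB[q]'(by omega) := by
        rw [List.getLast_eq_getElem, hmBt (mB.length - 1) (by omega)]
        exact getElem_idx_congr (by omega) (by omega)
      rw [this]
      have := hBcons q (by omega)
      rw [hBlast] at this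
      exact this.symm
  case close =>
    intro hne
    have h1 : (pA ++ mB.reverse).getLast hne = pB[1]'(by omega) := by
      rw [List.getLast_append_of_ne_nil _ hmBrev_ne, List.getLast_reverse]
      rw [List.head_eq_getElem_zero, hmBt 0 (by omega)]
    have h2 : (pA ++ mB.reverse).head hne = x := by
      rw [List.head_append_of_ne_nil hneA]
      exact hheadA
    rw [h1, h2, ← hB0]
    exact (hBcons 0 (by omega)).symm
  case chord =>
    intro i j hi hj hij hadj
    by_cases hjp : j < p
    · rw [hgetA i (by omega) hi, hgetA j hjp hj] at hadj
      exact Or.inl (hindA i j (by omega) (by omega) hij hadj)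
    · by_cases hip : i < p
      · rw [hgetA i hip hi, hgetB j (by omega) hj] at hadj
        have htb1 : 1 ≤ q - (j - p) := by omega
        have htb2 : q - (j - p) ≤ q := by omega
        have hY : pB[q - (j-p)]'(by omega) ∈ Y := hmemY _ htb1 htb2
        rcases hmemA _ (List.getElem_mem (by omega : i < pA.length)) with h | h | h
        · -- pA[i] = x, so i = 0
          have hi0 : i = 0 := by
            have := hndA.getElem_inj_iff.1 (h.trans hA0.symm)
            omega
          rw [h, ← hB0] at hadj
          have := hindB 0 (q - (j-p)) (by omega) (by omega) (by omega) hadj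
          right
          constructor
          · exact hi0
          · omega
        · -- pA[i] = y, so i = p - 1
          have hip1 : i = p - 1 := by
            have := hndA.getElem_inj_iff.1 (h.trans hAlast.symm)
            omega
          rw [h, ← hBlast] at hadj
          have := hindB (q - (j-p)) (q+1) (by omega) (by omega) (by omega) hadj.symm
          left
          omega
        · exact absurd hadj (hnoedge _ h _ hY)
      · rw [hgetB i (by omega) hi, hgetB j (by omega) hj] at hadj
        have h1 : q - (j - p) < q - (i - p) := by omega
        have := hindB (q - (j-p)) (q - (i-p)) (by omega) (by omega) h1 hadj.symm
        left
        omega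


----------------------------------------------------------------
-- separators

lemma reach_avoid {W : Set V} {x b : V} (hx : x ∉ W) (hbx : b ≠ x) :
    ∀ {p : V}, Reach G (insert x W) p b →
      (p ≠ x → (Reach G W p b ∨ ∃ w, G.Adj x w ∧ w ∈ W ∧ Reach G W w b)) ∧
      (p = x → ∃ w, G.Adj x w ∧ w ∈ W ∧ Reach G W w b) := by
  intro p h
  induction h using Relation.ReflTransGen.head_induction_on with
  | refl => exact ⟨fun _ => Or.inl Relation.ReflTransGen.refl, fun h => absurd h hbx⟩
  | @head p' q hr hrest ih =>
    constructor
    · intro hpx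
      have hp'W : p' ∈ W := by
        rcases Set.mem_insert_iff.1 hr.1 with h | h
        · exact absurd h hpx
        · exact h
      by_cases hqx : q = x
      · exact Or.inr (ih.2 hqx)
      · have hqW : q ∈ W := by
          rcases Set.mem_insert_iff.1 hr.2.1 with h | h
          · exact absurd h hqx
          · exact h
        rcases ih.1 hqx with h1 | h1
        · exact Or.inl (Relation.ReflTransGen.head ⟨hp'W, hqW, hr.2.2⟩ h1)
        · exact Or.inr h1
    · intro hpx
      subst hpx
      have hqx : q ≠ p' := fun h => G.irrefl (h ▸ hr.2.2)
      have hqW : q ∈ W := by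
        rcases Set.mem_insert_iff.1 hr.2.1 with h | h
        · exact absurd h hqx
        · exact h
      rcases ih.1 hqx with h1 | h1
      · exact ⟨q, hr.2.2, hqW, h1⟩
      · exact h1

section SepSec
variable [DecidableEq V]

/-- `S` separates `a` from `b` inside `s`. -/
def Sep (G : SimpleGraph V) (s : Finset V) (a b : V) (S : Finset V) : Prop :=
  S ⊆ s ∧ a ∉ S ∧ b ∉ S ∧ ¬ Reach G (↑s \ ↑S) a b

lemma exists_min_sep {s : Finset V} {a b : V} (ha : a ∈ s) (hb : b ∈ s) (hab : a ≠ b)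
    (hnadj : ¬ G.Adj a b) :
    ∃ S, Sep G s a b S ∧ ∀ x ∈ S, ¬ Sep G s a b (S.erase x) := by
  classical
  have h0 : Sep G s a b ((s.erase a).erase b) := by
    refine ⟨(Finset.erase_subset _ _).trans (Finset.erase_subset _ _), ?_, ?_, ?_⟩
    · intro h
      exact (Finset.mem_erase.1 ((Finset.erase_subset _ _) h)).1 rfl
    · intro h
      exact (Finset.mem_erase.1 h).1 rfl
    · intro h
      rcases Relation.ReflTransGen.cases_head h with h | ⟨c, hc, _⟩
      · exact hab h
      · have hcs : c ∈ (↑s : Set V) \ ↑((s.erase a).erase b) := hc.2.1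
        have hca : c ≠ a := fun h => G.irrefl (h ▸ hc.2.2)
        have hcb : c = b := by
          rcases hcs with ⟨h1, h2⟩
          simp only [Finset.coe_erase, Set.mem_diff, Set.mem_singleton_iff] at h2
          push_neg at h2
          by_contra hcb
          exact hcb (h2 ⟨h1, hca⟩)
        exact hnadj (hcb ▸ hc.2.2)
  suffices h : ∀ n (S : Finset V), S.card ≤ n → Sep G s a b S →
      ∃ S', Sep G s a b S' ∧ ∀ x ∈ S', ¬ Sep G s a b (S'.erase x) by
    exact h _ _ le_rfl h0
  intro n
  induction n with
  | zero =>
    intro S hS hsep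
    have : S = ∅ := Finset.card_eq_zero.1 (by omega)
    subst this
    exact ⟨∅, hsep, by simp⟩
  | succ n ih =>
    intro S hS hsep
    by_cases hmin : ∀ x ∈ S, ¬ Sep G s a b (S.erase x)
    · exact ⟨S, hsep, hmin⟩
    · push_neg at hmin
      obtain ⟨x, hx, hsep'⟩ := hmin
      exact ih (S.erase x) (by have := Finset.card_erase_of_mem hx; omega) hsep'

/-- key component lemma: a vertex of a minimal separator has a neighbour in the
component of `a`. -/
lemma sep_neighbor {s : Finset V} {a b : V} {S : Finset V} (ha : a ∈ s) (hb : b ∈ s)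
    (hS : Sep G s a b S) (x : V) (hx : x ∈ S)
    (hne : ¬ Sep G s a b (S.erase x)) :
    (∃ u, G.Adj x u ∧ u ∈ {v | Reach G (↑s \ ↑S) a v ∧ v ∈ (↑s : Set V) \ ↑S}) ∧
    (∃ w, G.Adj x w ∧ w ∈ {v | Reach G (↑s \ ↑S) b v ∧ v ∈ (↑s : Set V) \ ↑S}) := by
  classical
  set W : Set V := ↑s \ ↑S with hW
  have hxs : x ∈ s := hS.1 hx
  have hreach : Reach G (insert x W) a b := by
    by_contra hr
    apply hne
    refine ⟨(Finset.erase_subset _ _).trans hS.1, fun h => hS.2.1 (Finset.mem_of_mem_erase h),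
      fun h => hS.2.2.1 (Finset.mem_of_mem_erase h), ?_⟩
    have hset : (↑s : Set V) \ ↑(S.erase x) = insert x W := by
      ext v
      simp only [Finset.coe_erase, Set.mem_diff, Set.mem_insert_iff, hW,
        Finset.mem_coe, Set.mem_singleton_iff]
      constructor
      · rintro ⟨h1, h2⟩
        by_cases hvx : v = x
        · exact Or.inl hvx
        · exact Or.inr ⟨h1, fun hvS => h2 ⟨hvS, hvx⟩⟩
      · rintro (rfl | ⟨h1, h2⟩)
        · exact ⟨hxs, fun h => h.2 rfl⟩
        · exact ⟨h1, fun h => h2 h.1⟩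
    rw [hset]
    exact hr
  have hxW : x ∉ W := fun h => h.2 hx
  have hax : a ≠ x := fun h => hS.2.1 (h ▸ hx)
  have hbx : b ≠ x := fun h => hS.2.2.1 (h ▸ hx)
  constructor
  · -- neighbour in component of a : use path from b to a
    rcases (reach_avoid hxW (by exact hax) (Reach.symm hreach)).1 hbx with h1 | ⟨w, hw1, hw2, hw3⟩
    · exact absurd h1.symm hS.2.2.2
    · exact ⟨w, hw1, hw3.symm, hw2⟩
  · rcases (reach_avoid hxW hbx hreach).1 hax with h1 | ⟨w, hw1, hw2, hw3⟩
    · exact absurd h1 hS.2.2.2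
    · exact ⟨w, hw1, hw3.symm, hw2⟩

lemma reach_in_component {W : Set V} {a : V} :
    ∀ {v v' : V}, Reach G W a v → Reach G W v v' →
      Reach G {z | Reach G W a z ∧ z ∈ W} v v' := by
  intro v v' hav hvv'
  induction hvv' with
  | refl => exact Reach.refl
  | @tail w w' hvw hrel ih =>
    refine Relation.ReflTransGen.tail ih ⟨⟨Reach.trans hav hvw, hrel.1⟩,
      ⟨Reach.trans hav (Relation.ReflTransGen.tail hvw hrel), hrel.2.1⟩, hrel.2.2⟩

lemma sep_clique (hch : NoCyc G) {s : Finset V} {a b : V} (ha : a ∈ s) (hb : b ∈ s)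
    (hab : a ≠ b) (hnadj : ¬ G.Adj a b) {S : Finset V} (hS : Sep G s a b S)
    (hmin : ∀ x ∈ S, ¬ Sep G s a b (S.erase x)) :
    ∀ x ∈ S, ∀ y ∈ S, x ≠ y → G.Adj x y := by
  intro x hx y hy hxy
  by_contra hnxy
  set W : Set V := ↑s \ ↑S with hW
  set A : Set V := {v | Reach G W a v ∧ v ∈ W} with hA
  set B : Set V := {v | Reach G W b v ∧ v ∈ W} with hB
  obtain ⟨⟨uA, huA1, huA2⟩, ⟨uB, huB1, huB2⟩⟩ := sep_neighbor ha hb hS x hx (hmin x hx)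
  obtain ⟨⟨uA', huA1', huA2'⟩, ⟨uB', huB1', huB2'⟩⟩ := sep_neighbor ha hb hS y hy (hmin y hy)
  have hdisj : ∀ z, z ∈ A → z ∈ B → False := by
    intro z hz1 hz2
    exact hS.2.2.2 (Reach.trans hz1.1 hz2.1.symm)
  have hnoedge : ∀ u ∈ A, ∀ w ∈ B, ¬ G.Adj u w := by
    intro u hu w hw hadj
    exact hS.2.2.2 (Reach.trans hu.1
      (Reach.trans (Relation.ReflTransGen.single ⟨hu.2, hw.2, hadj⟩) hw.1.symm))
  have hxA : x ∉ A := fun h => h.2.2 hx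
  have hyA : y ∉ A := fun h => h.2.2 hy
  have hxB : x ∉ B := fun h => h.2.2 hx
  have hyB : y ∉ B := fun h => h.2.2 hy
  -- reach within A
  have hreachA : Reach G A uA uA' := by
    rw [hA]
    exact reach_in_component huA2.1 (Reach.trans huA2.1.symm huA2'.1)
  have hreachB : Reach G B uB uB' := by
    rw [hB]
    exact reach_in_component huB2.1 (Reach.trans huB2.1.symm huB2'.1)
  obtain ⟨lA, hlA⟩ := build_gp hxy huA1 huA1' huA2 huA2' hreachA (fun z hz _ => hz)
  obtain ⟨lB, hlB⟩ := build_gp hxy huB1 huB1' huB2 huB2' hreachB (fun z hz _ => hz)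
  obtain ⟨pA, hgpA, hndA, hindA⟩ := exists_min_path lA.length lA le_rfl hlA
  obtain ⟨pB, hgpB, hndB, hindB⟩ := exists_min_path lB.length lB le_rfl hlB
  exact cycle_contradiction hch hxy hnxy hxA hyA hxB hyB hdisj hnoedge
    hgpA hndA hindA hgpB hndB hindB


end SepSec

/-- `v` is simplicial within `s`. -/
def SimpIn (G : SimpleGraph V) (s : Finset V) (v : V) : Prop :=
  ∀ u ∈ s, ∀ w ∈ s, G.Adj v u → G.Adj v w → u ≠ w → G.Adj u w

lemma dirac (hch : NoCyc G) : ∀ n (s : Finset V), s.card ≤ n →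
    (∀ u ∈ s, ∀ w ∈ s, u ≠ w → G.Adj u w) ∨
    (∃ v ∈ s, ∃ w ∈ s, v ≠ w ∧ ¬ G.Adj v w ∧ SimpIn G s v ∧ SimpIn G s w) := by
  intro n
  induction n with
  | zero =>
    intro s hs
    left
    have : s = ∅ := Finset.card_eq_zero.1 (by omega)
    subst this
    simp
  | succ n ih =>
    intro s hcard
    by_cases hcl : ∀ u ∈ s, ∀ w ∈ s, u ≠ w → G.Adj u w
    · exact Or.inl hcl
    right
    push_neg at hcl
    obtain ⟨a, ha, b, hb, hab, hnadj⟩ := hcl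
    classical
    obtain ⟨S, hS, hmin⟩ := exists_min_sep ha hb hab hnadj
    have hclq := sep_clique hch ha hb hab hnadj hS hmin
    set W : Set V := ↑s \ ↑S with hWdef
    have hdisj : ∀ z, z ∈ {v | Reach G W a v ∧ v ∈ W} → z ∈ {v | Reach G W b v ∧ v ∈ W} →
        False := fun z hz1 hz2 => hS.2.2.2 (Reach.trans hz1.1 hz2.1.symm)
    have hnoedge : ∀ u ∈ {v | Reach G W a v ∧ v ∈ W}, ∀ w ∈ {v | Reach G W b v ∧ v ∈ W},
        ¬ G.Adj u w := fun u hu w hw hadj => hS.2.2.2 (Reach.trans hu.1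
      (Reach.trans (Relation.ReflTransGen.single ⟨hu.2, hw.2, hadj⟩) hw.1.symm))
    -- generic component step
    have key : ∀ (c d : V) (C : Set V), C = {v | Reach G W c v ∧ v ∈ W} → c ∈ C →
        d ∉ C → d ∈ s → d ∉ S → ∃ v ∈ C, v ∈ s ∧ SimpIn G s v := by
      intro c d C hC hcC hdC hds hdS
      have hCs : ∀ z ∈ C, z ∈ s := fun z hz => by
        rw [hC] at hz; exact hz.2.1
      have hclosure : ∀ v ∈ C, ∀ u ∈ s, G.Adj v u → u ∈ C ∨ u ∈ S := by
        intro v hv u hu hadj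
        by_cases huS : u ∈ S
        · exact Or.inr huS
        · left
          rw [hC] at hv ⊢
          have huW : u ∈ W := ⟨hu, huS⟩
          exact ⟨Relation.ReflTransGen.tail hv.1 ⟨hv.2, huW, hadj⟩, huW⟩
      set s₁ := s.filter (fun v => v ∈ C ∨ v ∈ S) with hs₁
      have hmem₁ : ∀ z, z ∈ s₁ ↔ z ∈ s ∧ (z ∈ C ∨ z ∈ S) := by
        intro z; simp [hs₁]
      have hs₁sub : s₁ ⊆ s := Finset.filter_subset _ _
      have hdnot : d ∉ s₁ := by
        rw [hmem₁]
        rintro ⟨_, h | h⟩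
        · exact hdC h
        · exact hdS h
      have hcard₁ : s₁.card ≤ n := by
        have hss : s₁ ⊂ s := Finset.ssubset_iff_of_subset hs₁sub |>.2 ⟨d, hds, hdnot⟩
        have := Finset.card_lt_card hss
        omega
      have hsimp_lift : ∀ v ∈ C, SimpIn G s₁ v → SimpIn G s v := by
        intro v hv hsimp u hu w hw h1 h2 h3
        apply hsimp u ?_ w ?_ h1 h2 h3
        · rw [hmem₁]; exact ⟨hu, hclosure v hv u hu h1⟩
        · rw [hmem₁]; exact ⟨hw, hclosure v hv w hw h2⟩
      rcases ih s₁ hcard₁ with hcl₁ | ⟨v, hv, w, hw, hvw, hnvw, hsv, hsw⟩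
      · refine ⟨c, hcC, hCs c hcC, hsimp_lift c hcC ?_⟩
        intro u hu w hw h1 h2 h3
        exact hcl₁ u hu w hw h3
      · have hvors : ∀ z, z ∈ s₁ → z ∈ C ∨ z ∈ S := fun z hz => ((hmem₁ z).1 hz).2
        have hone : v ∈ C ∨ w ∈ C := by
          rcases hvors v hv with h1 | h1
          · exact Or.inl h1
          · rcases hvors w hw with h2 | h2
            · exact Or.inr h2
            · exact absurd (hclq v h1 w h2 hvw) hnvw
        rcases hone with h1 | h1
        · exact ⟨v, h1, hCs v h1, hsimp_lift v h1 hsv⟩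
        · exact ⟨w, h1, hCs w h1, hsimp_lift w h1 hsw⟩
    have haW : a ∈ W := ⟨ha, hS.2.1⟩
    have hbW : b ∈ W := ⟨hb, hS.2.2.1⟩
    have haA : a ∈ {v | Reach G W a v ∧ v ∈ W} := ⟨Reach.refl, haW⟩
    have hbB : b ∈ {v | Reach G W b v ∧ v ∈ W} := ⟨Reach.refl, hbW⟩
    obtain ⟨vA, hvA, hvAs, hsimpA⟩ := key a b _ rfl haA
      (fun h => hdisj b h hbB) hb hS.2.2.1
    obtain ⟨vB, hvB, hvBs, hsimpB⟩ := key b a _ rfl hbB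
      (fun h => hdisj a haA h) ha hS.2.1
    refine ⟨vA, hvAs, vB, hvBs, ?_, ?_, hsimpA, hsimpB⟩
    · intro h
      exact hdisj vA hvA (h ▸ hvB)
    · exact hnoedge vA hvA vB hvB

lemma exists_simplicial (hch : NoCyc G) (s : Finset V) (hne : s.Nonempty) :
    ∃ v ∈ s, SimpIn G s v := by
  rcases dirac hch s.card s le_rfl with hcl | ⟨v, hv, _, _, _, _, hsimp, _⟩
  · obtain ⟨v, hv⟩ := hne
    exact ⟨v, hv, fun u hu w hw _ _ hne' => hcl u hu w hw hne'⟩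
  · exact ⟨v, hv, hsimp⟩

lemma coloring_of_no_clique (hch : NoCyc G) {k : ℕ} (hk : 0 < k)
    (hclq : ∀ t : Finset V, (∀ u ∈ t, ∀ w ∈ t, u ≠ w → G.Adj u w) → t.card ≤ k) :
    ∀ n (s : Finset V), s.card ≤ n →
    ∃ c : V → Fin k, ∀ u ∈ s, ∀ w ∈ s, G.Adj u w → c u ≠ c w := by
  intro n
  induction n with
  | zero =>
    intro s h
    have : s = ∅ := Finset.card_eq_zero.1 (by omega)
    subst this
    exact ⟨fun _ => ⟨0, hk⟩, by simp⟩
  | succ n ih =>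
    intro s hcard
    rcases s.eq_empty_or_nonempty with rfl | hne
    · exact ⟨fun _ => ⟨0, hk⟩, by simp⟩
    obtain ⟨v, hv, hsimp⟩ := exists_simplicial hch s hne
    classical
    obtain ⟨c, hc⟩ := ih (s.erase v) (by have := Finset.card_erase_of_mem hv; omega)
    set N := (s.erase v).filter (fun u => G.Adj v u) with hN
    have hmemN : ∀ z, z ∈ N ↔ (z ∈ s ∧ z ≠ v ∧ G.Adj v z) := by
      intro z
      simp [hN, Finset.mem_filter, Finset.mem_erase]
      tauto
    have hNcard : N.card < k := by
      have hclique : ∀ u ∈ insert v N, ∀ w ∈ insert v N, u ≠ w → G.Adj u w := by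
        intro u hu w hw hne'
        rcases Finset.mem_insert.1 hu with rfl | hu' <;>
          rcases Finset.mem_insert.1 hw with rfl | hw'
        · exact absurd rfl hne'
        · exact ((hmemN w).1 hw').2.2
        · exact (((hmemN u).1 hu').2.2).symm
        · have h1 := (hmemN u).1 hu'
          have h2 := (hmemN w).1 hw'
          exact hsimp u h1.1 w h2.1 h1.2.2 h2.2.2 hne'
      have h1 := hclq _ hclique
      have hvN : v ∉ N := fun h => ((hmemN v).1 h).2.1 rfl
      rw [Finset.card_insert_of_notMem hvN] at h1
      omega
    have hfresh : ∃ fc : Fin k, fc ∉ N.image c := by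
      by_contra h
      push_neg at h
      have h2 := Finset.card_le_card (fun z _ => h z : (Finset.univ : Finset (Fin k)) ⊆ N.image c)
      have h3 := Finset.card_image_le (s := N) (f := c)
      simp only [Finset.card_univ, Fintype.card_fin] at h2
      omega
    obtain ⟨fc, hfc⟩ := hfresh
    refine ⟨Function.update c v fc, ?_⟩
    intro u hu w hw hadj
    by_cases huv : u = v
    · subst huv
      have hwv : w ≠ u := fun h => G.irrefl (h ▸ hadj)
      rw [Function.update_self, Function.update_of_ne hwv]
      intro h
      exact hfc (Finset.mem_image.2 ⟨w, (hmemN w).2 ⟨hw, hwv, hadj⟩, h.symm⟩)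
    · by_cases hwv : w = v
      · subst hwv
        rw [Function.update_self, Function.update_of_ne huv]
        intro h
        exact hfc (Finset.mem_image.2 ⟨u, (hmemN u).2 ⟨hu, huv, hadj.symm⟩, h⟩)
      · rw [Function.update_of_ne huv, Function.update_of_ne hwv]
        exact hc u (Finset.mem_erase.2 ⟨huv, hu⟩) w (Finset.mem_erase.2 ⟨hwv, hw⟩) hadj


end ChordalAux

/-- A chordal graph (no induced cycle of length at least 4) which is not
k-colorable contains a clique on k+1 vertices. -/
theorem stmt_5 {V : Type*} (G : SimpleGraph V) (k : ℕ)
    (hchordal : ¬ ∃ m : ℕ, 4 ≤ m ∧ ∃ f : ZMod m → V, Function.Injective f ∧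
      ∀ i j : ZMod m, G.Adj (f i) (f j) ↔ (j = i + 1 ∨ i = j + 1))
    (hcol : ¬ G.Colorable k) :
    ∃ s : Finset V, G.IsNClique (k + 1) s := by
  classical
  by_contra hclique
  push_neg at hclique
  have hch : ChordalAux.NoCyc G := hchordal
  -- no clique of size k+1 gives the bound
  have hbound : ∀ t : Finset V, (∀ u ∈ t, ∀ w ∈ t, u ≠ w → G.Adj u w) → t.card ≤ k := by
    intro t ht
    by_contra hcard
    push_neg at hcard
    obtain ⟨t', ht', hcard'⟩ := Finset.exists_subset_card_eq (show k + 1 ≤ t.card by omega)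
    refine hclique t' ⟨?_, hcard'⟩
    intro u hu w hw hne
    exact ht u (ht' hu) w (ht' hw) hne
  rcases Nat.eq_zero_or_pos k with rfl | hk
  · -- k = 0 : V must be empty
    have hempty : ∀ v : V, False := by
      intro v
      refine hclique {v} ⟨?_, by simp⟩
      simp [Set.Pairwise]
    exact hcol ⟨⟨fun v => (hempty v).elim, fun {u w} h => (hempty u).elim⟩⟩
  · apply hcol
    have hhom : ∀ G' : G.Subgraph, G'.verts.Finite → G'.coe →g (⊤ : SimpleGraph (Fin k)) := by
      intro G' hfin
      have : Fintype G'.verts := hfin.fintype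
      set s : Finset V := Set.Finite.toFinset hfin with hs
      have hnE : Nonempty (G'.coe →g (⊤ : SimpleGraph (Fin k))) := by
        obtain ⟨c, hc⟩ := ChordalAux.coloring_of_no_clique hch hk hbound s.card s le_rfl
        refine ⟨⟨fun v => c v.1, ?_⟩⟩
        intro u w hadj
        have h1 : G.Adj u.1 w.1 := G'.adj_sub hadj
        have h2 : u.1 ∈ s := by simp [hs]
        have h3 : w.1 ∈ s := by simp [hs]
        have := hc u.1 h2 w.1 h3 h1
        simpa [SimpleGraph.top_adj] using this
      exact hnE.some
    obtain ⟨f⟩ := SimpleGraph.nonempty_hom_of_forall_finite_subgraph_hom hhom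
    exact ⟨f⟩
end

section
/- Let r, s, k, ℓ ≥ 0 with k ≥ ℓ and r ≥ k - ℓ, and let V_1,…,V_{s+r} be pairwise disjoint sets of size n each. Let 𝕊 ⊆ V_1 × ⋯ × V_s be a family of transversals that are pairwise ℓ-disjoint (any two distinct members share at most ℓ-1 coordinates as sets). Then there exists a family 𝔽 ⊆ V_1 × ⋯ × V_{s+r} such that: (1) the restriction of every F ∈ 𝔽 to the first s coordinates lies in 𝕊; (2) |𝔽| ≥ c·|𝕊|·n^{k-ℓ} for some constant c = c(r,s,k) > 0; (3) for all distinct F_1, F_2 ∈ 𝔽, if |F_1 ∩ F_2| ≥ k (as sets of vertices) then the number of indices i with s+1 ≤ i ≤ s+r and F_1(i) = F_2(i) is at most k - ℓ - 1. -/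
/-!
Extend every member of 𝕊 by every tail in V_{s+1} × ⋯ × V_{s+r} (n^r extensions each) and join
two extensions when they violate (3); as the V_i are disjoint, two transversals share exactly as
many vertices as coordinates. A neighbour of (f, t) either has head f and a tail agreeing with t
in at least k - ℓ places (at most 2^r n^{r-(k-ℓ)} of them), or a head g agreeing with f in j < ℓ
places (at most 2^s n^{ℓ-j} such g, since ℓ agreements determine a member of 𝕊) and a tail
agreeing with t in at least k - j places (at most 2^r n^{r-(k-j)}). So all degrees are
O(n^{r-(k-ℓ)}), and a greedy independent set has size Ω(|𝕊| n^{k-ℓ}).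
-/

open Finset Function

lemma card_le_pow_of_injOn_restrict {α ι : Type*} {V : ι → Finset α} {n : ℕ}
    (hV : ∀ i, #(V i) ≤ n) {𝓐 : Finset (ι → α)} (K : Finset ι) (hmem : ∀ g ∈ 𝓐, ∀ i ∈ K, g i ∈ V i)
    (hinj : ∀ g ∈ 𝓐, ∀ h ∈ 𝓐, (∀ i ∈ K, g i = h i) → g = h) : #𝓐 ≤ n ^ #K := by
  classical
  calc #𝓐 ≤ #(Fintype.piFinset fun i : K => V i) :=
        card_le_card_of_injOn (fun g i => g i)
          (fun g hg => Fintype.mem_piFinset.2 fun i => hmem g hg i i.2)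
          (fun g hg h hh hgh => hinj g hg h hh fun i hi => congrFun hgh ⟨i, hi⟩)
    _ ≤ n ^ #K := by
        rw [Fintype.card_piFinset]
        simpa using prod_le_pow_card (univ : Finset K) _ n fun i _ => hV i

theorem SimpleGraph.exists_isIndepSet_card_le_mul {V : Type*} [DecidableEq V] (G : SimpleGraph V)
    [DecidableRel G.Adj] (D : ℕ) (A : Finset V) (hA : ∀ a ∈ A, #{x ∈ A | G.Adj a x} ≤ D) :
    ∃ S ⊆ A, G.IsIndepSet S ∧ #A ≤ #S * (D + 1) := by
  induction A using Finset.strongInduction with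
  | H A ih =>
  obtain rfl | ⟨a, ha⟩ := A.eq_empty_or_nonempty
  · exact ⟨∅, subset_refl _, by simp, by simp⟩
  set A' := {x ∈ A.erase a | ¬ G.Adj a x}
  have hA'A : A' ⊆ A := (filter_subset _ _).trans (erase_subset _ _)
  have haA' : a ∉ A' := fun h => by simp [A'] at h
  obtain ⟨S, hSA', hS, hcard⟩ :=
    ih A' (Finset.ssubset_iff_subset_ne.2 ⟨hA'A, fun h => haA' (h ▸ ha)⟩) fun b hb =>
      (card_le_card (filter_subset_filter _ hA'A)).trans (hA b (hA'A hb))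
  refine ⟨insert a S, insert_subset ha (hSA'.trans hA'A), ?_, ?_⟩
  · rw [coe_insert]
    refine hS.insert fun b hb _ => ⟨(mem_filter.1 (hSA' hb)).2, fun h => ?_⟩
    exact (mem_filter.1 (hSA' hb)).2 h.symm
  · have hcover : A ⊆ insert a ({x ∈ A | G.Adj a x} ∪ A') := by
      intro x hx
      by_cases hxa : x = a
      · exact hxa ▸ mem_insert_self _ _
      by_cases hax : G.Adj a x
      · exact mem_insert_of_mem (mem_union_left _ (mem_filter.2 ⟨hx, hax⟩))
      · exact mem_insert_of_mem (mem_union_right _ (mem_filter.2 ⟨mem_erase.2 ⟨hxa, hx⟩, hax⟩))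
    calc #A ≤ #({x ∈ A | G.Adj a x} ∪ A') + 1 := (card_le_card hcover).trans (card_insert_le _ _)
      _ ≤ D + #A' + 1 := by grw [card_union_le, hA a ha]
      _ ≤ #(insert a S) * (D + 1) := by
        rw [card_insert_of_notMem fun h => haA' (hSA' h)]
        nlinarith

section Agreement

variable {α ι : Type*} [DecidableEq α] [Fintype ι]

def agreeCard (f g : ι → α) : ℕ := #{i | f i = g i}

lemma agreeCard_comm (f g : ι → α) : agreeCard f g = agreeCard g f := by
  simp only [agreeCard, eq_comm]

lemma agreeCard_lt_card_of_ne {f g : ι → α} (h : f ≠ g) : agreeCard f g < Fintype.card ι := by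
  obtain ⟨i, hi⟩ := Function.ne_iff.1 h
  exact card_lt_univ_of_notMem (x := i) (by simp [hi])

lemma card_image_inter_image_eq_agreeCard {W : ι → Finset α} (hW : Pairwise (Disjoint on W))
    {f g : ι → α} (hf : ∀ i, f i ∈ W i) (hg : ∀ i, g i ∈ W i) :
    #(univ.image f ∩ univ.image g) = agreeCard f g := by
  have index_eq {i j : ι} {x : α} (hi : x ∈ W i) (hj : x ∈ W j) : i = j := by
    by_contra hij
    exact disjoint_left.1 (hW hij) hi hj
  have hinj : Injective f := fun i j hij => index_eq (hf i) (hij ▸ hf j)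
  rw [agreeCard, ← card_image_of_injective _ hinj]
  congr 1
  ext x
  simp only [mem_inter, mem_image, mem_univ, true_and, mem_filter]
  constructor
  · rintro ⟨⟨i, rfl⟩, j, hj⟩
    obtain rfl := index_eq (hg j) (hj ▸ hf i)
    exact ⟨_, hj.symm, rfl⟩
  · rintro ⟨i, hi, rfl⟩
    exact ⟨⟨i, rfl⟩, i, hi.symm⟩

variable [DecidableEq ι]

lemma card_filter_le_agreeCard_le_choose_mul (𝓐 : Finset (ι → α)) (f₀ : ι → α) (b M : ℕ)
    (h : ∀ J : Finset ι, #J = b → #{g ∈ 𝓐 | ∀ i ∈ J, f₀ i = g i} ≤ M) :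
    #{g ∈ 𝓐 | b ≤ agreeCard f₀ g} ≤ (Fintype.card ι).choose b * M := by
  have hcover : {g ∈ 𝓐 | b ≤ agreeCard f₀ g} ⊆
      (powersetCard b univ).biUnion fun J => {g ∈ 𝓐 | ∀ i ∈ J, f₀ i = g i} := by
    intro g hg
    obtain ⟨hg𝓐, hb⟩ := mem_filter.1 hg
    obtain ⟨J, hJ, rfl⟩ := exists_subset_card_eq hb
    exact mem_biUnion.2 ⟨J, mem_powersetCard.2 ⟨subset_univ J, rfl⟩,
      mem_filter.2 ⟨hg𝓐, fun i hi => (mem_filter.1 (hJ hi)).2⟩⟩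
  calc #{g ∈ 𝓐 | b ≤ agreeCard f₀ g}
      ≤ ∑ J ∈ powersetCard b univ, #{g ∈ 𝓐 | ∀ i ∈ J, f₀ i = g i} :=
        (card_le_card hcover).trans card_biUnion_le
    _ ≤ ∑ _J ∈ powersetCard b (univ : Finset ι), M :=
        sum_le_sum fun J hJ => h J (mem_powersetCard.1 hJ).2
    _ = (Fintype.card ι).choose b * M := by simp

lemma card_piFinset_filter_le_agreeCard_le {W : ι → Finset α} {n : ℕ}
    (hW : ∀ i, #(W i) ≤ n) (t₀ : ι → α) (b : ℕ) :
    #{t ∈ Fintype.piFinset W | b ≤ agreeCard t₀ t} ≤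
      (Fintype.card ι).choose b * n ^ (Fintype.card ι - b) := by
  refine card_filter_le_agreeCard_le_choose_mul _ t₀ b _ fun J hJ => ?_
  rw [← hJ, ← card_compl]
  refine card_le_pow_of_injOn_restrict hW Jᶜ
    (fun t ht i _ => Fintype.mem_piFinset.1 (mem_filter.1 ht).1 i) fun t ht t' ht' htt' => ?_
  funext i
  by_cases hi : i ∈ J
  · exact ((mem_filter.1 ht).2 i hi).symm.trans ((mem_filter.1 ht').2 i hi)
  · exact htt' i (mem_compl.2 hi)

lemma card_filter_le_agreeCard_le_of_pairwise {U : ι → Finset α} {n l : ℕ}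
    (hn : 1 ≤ n) (hU : ∀ i, #(U i) ≤ n) {𝓢 : Finset (ι → α)} (hmem : ∀ g ∈ 𝓢, ∀ i, g i ∈ U i)
    (h𝓢 : ∀ f ∈ 𝓢, ∀ g ∈ 𝓢, f ≠ g → agreeCard f g < l) (f₀ : ι → α) (j : ℕ) :
    #{g ∈ 𝓢 | j ≤ agreeCard f₀ g} ≤ (Fintype.card ι).choose j * n ^ (l - j) := by
  refine card_filter_le_agreeCard_le_choose_mul _ f₀ j _ fun J hJ => ?_
  -- distinct members of `𝓢` agree in fewer than `m` places
  set m := min l (Fintype.card ι)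
  obtain ⟨J', hJ'J, hJ'⟩ := exists_subset_card_eq (s := Jᶜ) (n := m - j)
    (by rw [card_compl, hJ]; omega)
  calc _ ≤ n ^ #J' := card_le_pow_of_injOn_restrict hU J'
          (fun g hg i _ => hmem g (mem_filter.1 hg).1 i) fun g hg g' hg' hgg' => ?_
    _ ≤ n ^ (l - j) := pow_le_pow_right₀ hn (by omega)
  obtain ⟨hg𝓢, hgJ⟩ := mem_filter.1 hg
  obtain ⟨hg'𝓢, hg'J⟩ := mem_filter.1 hg'
  by_contra hne
  have hJJ' : J ∪ J' ⊆ ({i | g i = g' i} : Finset ι) := fun i hi => mem_filter.2 ⟨mem_univ i,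
    (mem_union.1 hi).elim (fun hiJ => (hgJ i hiJ).symm.trans (hg'J i hiJ)) (hgg' i)⟩
  have hm : m ≤ agreeCard g g' := by
    have := card_le_card hJJ'
    rw [card_union_of_disjoint (disjoint_left.2 fun i hiJ hiJ' => mem_compl.1 (hJ'J hiJ') hiJ),
      hJ, hJ'] at this
    exact le_trans (by omega) this
  have := h𝓢 g hg𝓢 g' hg'𝓢 hne
  have := agreeCard_lt_card_of_ne hne
  omega

end Agreement

section Extension

variable {α ι κ : Type*} [DecidableEq α] [Fintype ι] [Fintype κ]

def conflictGraph (k l : ℕ) : SimpleGraph ((ι → α) × (κ → α)) where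
  Adj p q := p ≠ q ∧ k ≤ agreeCard p.1 q.1 + agreeCard p.2 q.2 ∧ k - l ≤ agreeCard p.2 q.2
  symm := ⟨fun p q h => by rwa [ne_comm, agreeCard_comm q.1, agreeCard_comm q.2]⟩
  loopless := ⟨fun _ h => h.1 rfl⟩

lemma conflictGraph_adj {k l : ℕ} {p q : (ι → α) × (κ → α)} :
    (conflictGraph k l).Adj p q ↔
      p ≠ q ∧ k ≤ agreeCard p.1 q.1 + agreeCard p.2 q.2 ∧ k - l ≤ agreeCard p.2 q.2 :=
  Iff.rfl

instance (k l : ℕ) : DecidableRel (conflictGraph (α := α) (ι := ι) (κ := κ) k l).Adj :=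
  fun _ _ => decidable_of_iff' _ conflictGraph_adj

variable [DecidableEq κ] {𝓢 : Finset (ι → α)} {U : ι → Finset α}
  {W : κ → Finset α} {n k l : ℕ}

lemma conflictGraph_neighbours_subset (h𝓢 : ∀ f ∈ 𝓢, ∀ g ∈ 𝓢, f ≠ g → agreeCard f g < l)
    {p : (ι → α) × (κ → α)} (hp : p.1 ∈ 𝓢) :
    {q ∈ 𝓢 ×ˢ Fintype.piFinset W | (conflictGraph k l).Adj p q} ⊆
      ({p.1} ×ˢ {t ∈ Fintype.piFinset W | k - l ≤ agreeCard p.2 t}) ∪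
        (range l).biUnion fun j =>
          {g ∈ 𝓢 | j ≤ agreeCard p.1 g} ×ˢ {t ∈ Fintype.piFinset W | k - j ≤ agreeCard p.2 t} := by
  rintro ⟨g, t⟩ hq
  obtain ⟨hq, -, hk, hkl⟩ := (mem_filter.trans (and_congr_right' conflictGraph_adj)).1 hq
  obtain ⟨hg, ht⟩ := mem_product.1 hq
  by_cases hgp : g = p.1
  · exact mem_union_left _ (mem_product.2 ⟨mem_singleton.2 hgp, mem_filter.2 ⟨ht, hkl⟩⟩)
  · refine mem_union_right _ (mem_biUnion.2 ⟨agreeCard p.1 g,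
      mem_range.2 (h𝓢 p.1 hp g hg (Ne.symm hgp)), mem_product.2 ⟨mem_filter.2 ⟨hg, le_rfl⟩,
        mem_filter.2 ⟨ht, Nat.sub_le_of_le_add (by rwa [add_comm] at hk)⟩⟩⟩)

variable [DecidableEq ι]

lemma card_conflictGraph_neighbours_le (hn : 1 ≤ n) (hlk : l ≤ k) (hr : k - l ≤ Fintype.card κ)
    (hU : ∀ i, #(U i) ≤ n) (hW : ∀ i, #(W i) ≤ n) (hmem : ∀ g ∈ 𝓢, ∀ i, g i ∈ U i)
    (h𝓢 : ∀ f ∈ 𝓢, ∀ g ∈ 𝓢, f ≠ g → agreeCard f g < l) {p : (ι → α) × (κ → α)} (hp : p.1 ∈ 𝓢) :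
    #{q ∈ 𝓢 ×ˢ Fintype.piFinset W | (conflictGraph k l).Adj p q} ≤
      (2 ^ Fintype.card κ + l * 2 ^ (Fintype.card ι + Fintype.card κ)) *
        n ^ (Fintype.card κ - (k - l)) := by
  set s := Fintype.card ι
  set r := Fintype.card κ
  have htails (b : ℕ) := card_piFinset_filter_le_agreeCard_le hW p.2 b
  have hheads (j : ℕ) := card_filter_le_agreeCard_le_of_pairwise hn hU hmem h𝓢 p.1 j
  -- the exponents add up to `r - (k - l)` unless `r < k - j`, where `r.choose (k - j)` vanishes
  have hterm (j : ℕ) (hj : j < l) :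
      s.choose j * n ^ (l - j) * (r.choose (k - j) * n ^ (r - (k - j))) ≤
        2 ^ (s + r) * n ^ (r - (k - l)) := by
    rcases le_or_gt (k - j) r with hkj | hkj
    · calc _ = s.choose j * r.choose (k - j) * n ^ (l - j + (r - (k - j))) := by ring
        _ ≤ 2 ^ s * 2 ^ r * n ^ (r - (k - l)) := by
            rw [show l - j + (r - (k - j)) = r - (k - l) by omega]
            gcongr <;> exact Nat.choose_le_two_pow _ _
        _ = _ := by ring
    · simp [Nat.choose_eq_zero_of_lt hkj]
  calc _ ≤ #({p.1} ×ˢ {t ∈ Fintype.piFinset W | k - l ≤ agreeCard p.2 t}) +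
        ∑ j ∈ range l, #({g ∈ 𝓢 | j ≤ agreeCard p.1 g} ×ˢ
          {t ∈ Fintype.piFinset W | k - j ≤ agreeCard p.2 t}) :=
        (card_le_card (conflictGraph_neighbours_subset h𝓢 hp)).trans
          ((card_union_le _ _).trans (Nat.add_le_add_left card_biUnion_le _))
    _ ≤ 2 ^ r * n ^ (r - (k - l)) + ∑ _j ∈ range l, 2 ^ (s + r) * n ^ (r - (k - l)) := by
        simp only [card_product, card_singleton, one_mul]
        refine add_le_add ((htails _).trans ?_) (sum_le_sum fun j hj =>
          (Nat.mul_le_mul (hheads j) (htails _)).trans (hterm j (mem_range.1 hj)))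
        gcongr
        exact Nat.choose_le_two_pow _ _
    _ = _ := by rw [sum_const, card_range, smul_eq_mul]; ring

theorem exists_conflictGraph_isIndepSet_card_le (hn : 1 ≤ n) (hlk : l ≤ k)
    (hr : k - l ≤ Fintype.card κ) (hU : ∀ i, #(U i) ≤ n) (hW : ∀ i, #(W i) = n)
    (hmem : ∀ g ∈ 𝓢, ∀ i, g i ∈ U i) (h𝓢 : ∀ f ∈ 𝓢, ∀ g ∈ 𝓢, f ≠ g → agreeCard f g < l) :
    ∃ 𝓕 ⊆ 𝓢 ×ˢ Fintype.piFinset W,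
      (conflictGraph k l).IsIndepSet (𝓕 : Set ((ι → α) × (κ → α))) ∧ #𝓢 * n ^ (k - l) ≤
        (2 ^ Fintype.card κ + l * 2 ^ (Fintype.card ι + Fintype.card κ) + 1) * #𝓕 := by
  set C := 2 ^ Fintype.card κ + l * 2 ^ (Fintype.card ι + Fintype.card κ)
  set m := n ^ (Fintype.card κ - (k - l))
  obtain ⟨𝓕, h𝓕, hind, hcard⟩ := (conflictGraph k l).exists_isIndepSet_card_le_mul (C * m)
    (𝓢 ×ˢ Fintype.piFinset W) fun p hp =>
      card_conflictGraph_neighbours_le hn hlk hr hU (fun i => (hW i).le) hmem h𝓢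
        (mem_product.1 hp).1
  refine ⟨𝓕, h𝓕, hind, Nat.le_of_mul_le_mul_right ?_ (show 0 < m by positivity)⟩
  calc #𝓢 * n ^ (k - l) * m = #(𝓢 ×ˢ Fintype.piFinset W) := by
        rw [card_product, Fintype.card_piFinset, mul_assoc, ← pow_add]
        simp [hW, show k - l + (Fintype.card κ - (k - l)) = Fintype.card κ by omega]
    _ ≤ #𝓕 * (C * m + 1) := hcard
    _ ≤ (C + 1) * #𝓕 * m := by
        have : 1 ≤ m := Nat.one_le_pow _ _ hn
        nlinarith

end Extension

section Append

variable {α : Type*} [DecidableEq α] {s r : ℕ}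

lemma agreeCard_append (f g : Fin s → α) (t t' : Fin r → α) :
    agreeCard (Fin.append f t) (Fin.append g t') = agreeCard f g + agreeCard t t' := by
  simp only [agreeCard, card_filter, Fin.sum_univ_add, Fin.append_left, Fin.append_right]

lemma card_filter_le_val_append_eq_agreeCard (f g : Fin s → α) (t t' : Fin r → α) :
    #{i : Fin (s + r) | s ≤ i.val ∧ Fin.append f t i = Fin.append g t' i} = agreeCard t t' := by
  simp only [agreeCard, card_filter, Fin.sum_univ_add, Fin.val_castAdd, Fin.val_natAdd,
    Fin.append_left, Fin.append_right, Nat.le_add_right, true_and, not_le.2 (Fin.is_lt _),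
    false_and, if_false, sum_const_zero, zero_add]

end Append

/-- The extension lemma: given r,s,k,ℓ with ℓ ≤ k and k - ℓ ≤ r, pairwise
disjoint sets V_1,…,V_{s+r} of size n each (n large), and a family 𝕊 of
pairwise ℓ-disjoint transversals of V_1 × ⋯ × V_s, there is a family 𝓕 of
transversals of V_1 × ⋯ × V_{s+r} such that (1) each member restricts to a
member of 𝕊 on the first s coordinates, (2) |𝓕| ≥ c·|𝕊|·n^{k-ℓ}, and (3) any
two distinct members sharing at least k vertices agree on at most k-ℓ-1 of the
last r coordinates. -/
theorem stmt_9 (r s k l : ℕ) (hlk : l ≤ k) (hr : k - l ≤ r) :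
    ∃ c : ℝ, 0 < c ∧ ∃ N : ℕ, ∀ n ≥ N, ∀ V : Fin (s + r) → Finset ℕ,
      (∀ i, (V i).card = n) → (∀ i j, i ≠ j → Disjoint (V i) (V j)) →
      ∀ 𝓢 : Finset (Fin s → ℕ),
        (∀ f ∈ 𝓢, ∀ i : Fin s, f i ∈ V (Fin.castAdd r i)) →
        (∀ f ∈ 𝓢, ∀ g ∈ 𝓢, f ≠ g →
          ((Finset.univ.image f) ∩ (Finset.univ.image g)).card < l) →
        ∃ 𝓕 : Finset (Fin (s + r) → ℕ),
          (∀ f ∈ 𝓕, ∀ i, f i ∈ V i) ∧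
          (∀ f ∈ 𝓕, (fun i : Fin s => f (Fin.castAdd r i)) ∈ 𝓢) ∧
          c * (𝓢.card * (n : ℝ) ^ (k - l)) ≤ 𝓕.card ∧
          (∀ f ∈ 𝓕, ∀ g ∈ 𝓕, f ≠ g →
            k ≤ ((Finset.univ.image f) ∩ (Finset.univ.image g)).card →
            (Finset.univ.filter fun i : Fin (s + r) => s ≤ i.val ∧ f i = g i).card
              < k - l) := by
  refine ⟨1 / (2 ^ r + l * 2 ^ (s + r) + 1 : ℕ), by positivity, 1,
    fun n hn V hV hdisj 𝓢 h𝓢V h𝓢 => ?_⟩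
  have hdisjHead : Pairwise (Disjoint on fun i => V (Fin.castAdd r i)) :=
    fun i j hij => hdisj _ _ ((Fin.castAdd_injective s r).ne hij)
  obtain ⟨𝓕, h𝓕, hind, hcard⟩ := exists_conflictGraph_isIndepSet_card_le (k := k)
    (U := fun i => V (Fin.castAdd r i)) (W := fun i => V (Fin.natAdd s i)) hn hlk
    (by simpa using hr) (fun i => (hV _).le) (fun i => hV _) h𝓢V fun f hf g hg hfg =>
      card_image_inter_image_eq_agreeCard hdisjHead (h𝓢V f hf) (h𝓢V g hg) ▸ h𝓢 f hf g hg hfg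
  simp only [Fintype.card_fin] at hcard
  have hmem (p) (hp : p ∈ 𝓕) (i : Fin (s + r)) : Fin.append p.1 p.2 i ∈ V i := by
    obtain ⟨hp1, hp2⟩ := mem_product.1 (h𝓕 hp)
    induction i using Fin.addCases with
    | left i => simpa using h𝓢V _ hp1 i
    | right i => simpa using Fintype.mem_piFinset.1 hp2 i
  have happend : Injective fun p : (Fin s → ℕ) × (Fin r → ℕ) => Fin.append p.1 p.2 :=
    (Fin.appendEquiv s r).injective
  refine ⟨𝓕.image fun p => Fin.append p.1 p.2, ?_, ?_, ?_, ?_⟩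
  · simpa only [forall_mem_image] using hmem
  · simpa only [forall_mem_image, Fin.append_left] using
      fun p hp => (mem_product.1 (h𝓕 hp)).1
  · rw [card_image_of_injective _ happend, div_mul_eq_mul_div, one_mul,
      div_le_iff₀ (by positivity)]
    exact_mod_cast hcard.trans_eq (mul_comm _ _)
  · simp only [forall_mem_image]
    intro p hp q hq hpq hk
    replace hpq : p ≠ q := happend.ne_iff.1 hpq
    rw [card_image_inter_image_eq_agreeCard (fun i j => hdisj i j) (hmem p hp) (hmem q hq),
      agreeCard_append] at hk
    rw [card_filter_le_val_append_eq_agreeCard]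
    by_contra! hkl
    exact hind (mem_coe.2 hp) (mem_coe.2 hq) hpq ⟨hpq, hk, hkl⟩
end

section
/- For every t ≥ 3 there exists a constant C such that for all sufficiently large N there is a set B ⊆ [N] with |B| ≥ N / exp(C·√(log N)) containing no nontrivial solution to y_1 + ⋯ + y_{t-1} = (t-1)·y_t (where a solution with y_1,…,y_t ∈ B is trivial iff y_1 = ⋯ = y_t). -/
/-!
Behrend's construction with base `D = m d`: take the integer points of `[0, d)ⁿ` on a sphere
`∑ xᵢ² = k` and read them as base-`D` numbers. A sum of `m` such digit vectors has digits
`< m d`, so no carries occur and `y₁ + ⋯ + y_m = m y_{m+1}` lifts to the same equation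
between the vectors. Points of a Euclidean sphere whose average is again on the sphere all
coincide, so only trivial solutions remain. Pigeonholing over the `n d²` possible values of `k`
gives a sphere with `≥ dⁿ / (n d²)` points, and the choice `n = ⌈√(log N)⌉`,
`d = ⌊N^(1/n) / m⌋` makes this `N / exp (O(√(log N)))` while `(m d)ⁿ ≤ N`.
-/

open Finset Real

theorem eq_of_norm_eq_of_sum_eq_card_nsmul {ι E : Type*} [NormedAddCommGroup E]
    [InnerProductSpace ℝ E] {s : Finset ι} {v : ι → E} {w : E}
    (hv : ∀ i ∈ s, ‖v i‖ = ‖w‖) (hsum : ∑ i ∈ s, v i = #s • w) : ∀ i ∈ s, v i = w := by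
  have hzero : ∑ i ∈ s, ‖v i - w‖ ^ 2 = 0 := by
    calc ∑ i ∈ s, ‖v i - w‖ ^ 2 = ∑ i ∈ s, (2 * ‖w‖ ^ 2 - 2 * inner ℝ (v i) w) :=
          sum_congr rfl fun i hi => by rw [norm_sub_sq_real, hv i hi]; ring
      _ = 2 * #s * ‖w‖ ^ 2 - 2 * inner ℝ (∑ i ∈ s, v i) w := by
          rw [sum_sub_distrib, sum_const, ← mul_sum, sum_inner, nsmul_eq_mul]; ring
      _ = 0 := by
          rw [hsum, ← Nat.cast_smul_eq_nsmul ℝ, real_inner_smul_left,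
            real_inner_self_eq_norm_sq]
          ring
  intro i hi
  simpa [sub_eq_zero] using (sum_eq_zero_iff_of_nonneg fun i _ => sq_nonneg _).1 hzero i hi

namespace Behrend

variable {n d k D : ℕ}

theorem map_lt_pow {x : Fin n → ℕ} (hx : ∀ i, x i < D) : map D x < D ^ n := by
  induction n with
  | zero => simp
  | succ n ih =>
    have hD : 0 < D := (Nat.zero_le _).trans_lt (hx 0)
    have htail := ih (x := x ∘ Fin.succ) fun i => hx _
    rw [map_succ', pow_succ]
    nlinarith [hx 0]

theorem lt_of_mem_sphere {x : Fin n → ℕ} (hx : x ∈ sphere n d k) (i : Fin n) : x i < d :=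
  mem_box.1 (sphere_subset_box hx) i

theorem eq_of_mem_sphere_of_sum_eq {m : ℕ} {v : ℕ → Fin n → ℕ}
    (hv : ∀ i ≤ m, v i ∈ sphere n d k) (hsum : ∑ i ∈ range m, v i = m • v m) :
    ∀ i < m, v i = v m := by
  let f : (Fin n → ℕ) →+ EuclideanSpace ℝ (Fin n) :=
    { toFun := fun x => WithLp.toLp 2 (((↑) : ℕ → ℝ) ∘ x)
      map_zero' := PiLp.ext fun _ => Nat.cast_zero
      map_add' := fun _ _ => PiLp.ext fun _ => Nat.cast_add _ _ }
  have hf : Function.Injective f := (WithLp.toLp_injective 2).comp Nat.cast_injective.comp_left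
  have hnorm : ∀ i ∈ range m, ‖f (v i)‖ = ‖f (v m)‖ := fun i hi => by
    rw [mem_range] at hi
    exact (norm_of_mem_sphere (hv i hi.le)).trans (norm_of_mem_sphere (hv m le_rfl)).symm
  have hfsum : ∑ i ∈ range m, f (v i) = #(range m) • f (v m) := by
    rw [card_range, ← map_nsmul, ← hsum, map_sum]
  exact fun i hi => hf (eq_of_norm_eq_of_sum_eq_card_nsmul hnorm hfsum i (mem_range.2 hi))

def sphereSet (n d k D : ℕ) : Finset ℕ := (sphere n d k).image fun x => map D x + 1

theorem sphereSet_subset_Icc (hdD : d ≤ D) : sphereSet n d k D ⊆ Icc 1 (D ^ n) := by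
  simp only [sphereSet, image_subset_iff, mem_Icc]
  intro x hx
  have := map_lt_pow fun i => (lt_of_mem_sphere hx i).trans_le hdD
  omega

theorem card_sphereSet (hdD : d ≤ D) : #(sphereSet n d k D) = #(sphere n d k) := by
  refine card_image_of_injOn fun x hx y hy hxy => map_injOn ?_ ?_ (Nat.succ_injective hxy)
  · exact fun i => (lt_of_mem_sphere hx i).trans_le hdD
  · exact fun i => (lt_of_mem_sphere hy i).trans_le hdD

theorem eq_of_mem_sphereSet_of_sum_eq {m : ℕ} (hmD : m * d ≤ D) {y : ℕ → ℕ}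
    (hy : ∀ i ≤ m, y i ∈ sphereSet n d k D) (hsum : ∑ i ∈ range m, y i = m * y m) :
    ∀ i < m, y i = y m := by
  intro i₀ hi₀
  have hm : 0 < m := by omega
  choose! v hv hvy using fun i (hi : i ≤ m) => mem_image.1 (hy i hi)
  have hv' : ∀ i ∈ range m, v i ∈ sphere n d k := fun i hi => hv i (mem_range.1 hi).le
  have hmap : map D (∑ i ∈ range m, v i) = map D (m • v m) := by
    have : ∑ i ∈ range m, (map D (v i) + 1) = m * (map D (v m) + 1) := by
      rw [hvy m le_rfl, ← hsum]
      exact sum_congr rfl fun i hi => hvy i (mem_range.1 hi).le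
    rw [sum_add_distrib, sum_const, card_range, smul_eq_mul, mul_add] at this
    rw [map_sum, map_nsmul, smul_eq_mul]
    omega
  have hsumv : ∑ i ∈ range m, v i = m • v m := by
    refine map_injOn (fun j => ?_) (fun j => ?_) hmap
    · calc (∑ i ∈ range m, v i) j = ∑ i ∈ range m, v i j := sum_apply _ _ _
        _ < ∑ i ∈ range m, d := sum_lt_sum_of_nonempty (nonempty_range_iff.2 hm.ne')
          fun i hi => lt_of_mem_sphere (hv' i hi) j
        _ ≤ D := by rw [sum_const, card_range, smul_eq_mul]; exact hmD
    · calc (m • v m) j = m * v m j := rfl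
        _ < m * d := Nat.mul_lt_mul_of_pos_left (lt_of_mem_sphere (hv m le_rfl) j) hm
        _ ≤ D := hmD
  rw [← hvy i₀ hi₀.le, ← hvy m le_rfl, eq_of_mem_sphere_of_sum_eq hv hsumv i₀ hi₀]

end Behrend

theorem exists_behrend_parameters_of_log_eq_sq {m : ℕ} (hm : 0 < m) {N s : ℝ} (hN : 0 < N)
    (hs : log N = s ^ 2) (hs₁ : 1 ≤ s) (hsm : 2 * log (2 * m) ≤ s) :
    ∃ n d : ℕ, ((m * d) ^ n : ℝ) ≤ N ∧
      N / exp ((4 + 2 * log (2 * m)) * s) ≤ ((d ^ n : ℕ) : ℝ) / ((n * d ^ 2 : ℕ) : ℝ) := by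
  set n := ⌈s⌉₊
  set X := exp (s ^ 2 / n)
  set d := ⌊X / m⌋₊
  have hm₁ : (1 : ℝ) ≤ m := by exact_mod_cast hm
  have hn_ge : s ≤ n := Nat.le_ceil s
  have hn_le : (n : ℝ) ≤ 2 * s := Nat.ceil_le_two_mul (by linarith)
  have hn_pos : (0 : ℝ) < n := by linarith
  have hlogX_le : s ^ 2 / n ≤ s := by rw [div_le_iff₀ hn_pos]; nlinarith
  have hlogX_ge : s / 2 ≤ s ^ 2 / n := by rw [le_div_iff₀ hn_pos]; nlinarith
  have hXn : X ^ n = N := by rw [← exp_nat_mul, mul_div_cancel₀ _ hn_pos.ne', ← hs, exp_log hN]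
  have hmX : 2 * m ≤ X := by
    rw [← exp_log (by positivity : (0 : ℝ) < 2 * m)]
    exact exp_le_exp.2 (by linarith)
  have hd_ge : X / (2 * m) ≤ d := by
    have := Nat.div_two_lt_floor (a := X / m) (by rw [le_div_iff₀ (by positivity)]; linarith)
    rw [div_div, mul_comm] at this
    exact this.le
  have hmd : m * d ≤ X := by
    have := Nat.floor_le (a := X / m) (by positivity)
    rw [le_div_iff₀ (by positivity)] at this
    linarith
  have hd_pos : (0 : ℝ) < d := by
    have : 1 ≤ X / (2 * m) := (one_le_div (by positivity)).2 hmX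
    linarith
  refine ⟨n, d, hXn ▸ pow_le_pow_left₀ (by positivity) hmd n, ?_⟩
  have hsize : (n * d ^ 2 : ℝ) * (2 * m) ^ n ≤ exp ((4 + 2 * log (2 * m)) * s) := by
    have h₁ : (n : ℝ) ≤ exp (2 * s) := by linarith [add_one_le_exp (2 * s)]
    have h₂ : (d : ℝ) ^ 2 ≤ exp (2 * s) := by
      calc (d : ℝ) ^ 2 ≤ X ^ 2 := pow_le_pow_left₀ hd_pos.le (by nlinarith) 2
        _ = exp (2 * (s ^ 2 / n)) := by rw [← exp_nat_mul]; norm_num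
        _ ≤ exp (2 * s) := exp_le_exp.2 (by linarith)
    have h₃ : ((2 * m : ℝ)) ^ n ≤ exp (2 * s * log (2 * m)) := by
      rw [← exp_log (by positivity : (0 : ℝ) < 2 * m), ← exp_nat_mul, log_exp]
      exact exp_le_exp.2 (mul_le_mul_of_nonneg_right hn_le (log_nonneg (by linarith)))
    calc (n * d ^ 2 : ℝ) * (2 * m) ^ n
        ≤ exp (2 * s) * exp (2 * s) * exp (2 * s * log (2 * m)) := by gcongr
      _ = exp ((4 + 2 * log (2 * m)) * s) := by rw [← exp_add, ← exp_add]; ring_nf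
  push_cast
  calc N / exp ((4 + 2 * log (2 * m)) * s) ≤ N / ((n * d ^ 2 : ℝ) * (2 * m) ^ n) := by gcongr
    _ = (X / (2 * m)) ^ n / (n * d ^ 2) := by rw [div_pow, hXn, div_div, mul_comm]
    _ ≤ d ^ n / (n * d ^ 2) := by gcongr

theorem exists_behrend_parameters {m : ℕ} (hm : 0 < m) :
    ∃ C : ℝ, ∃ N₀ : ℕ, ∀ N ≥ N₀, ∃ n d : ℕ, (m * d) ^ n ≤ N ∧
      (N : ℝ) / exp (C * √(log N)) ≤ ((d ^ n : ℕ) : ℝ) / ((n * d ^ 2 : ℕ) : ℝ) := by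
  set K := max 1 (2 * log (2 * m))
  refine ⟨4 + 2 * log (2 * m), ⌈exp (K ^ 2)⌉₊, fun N hN => ?_⟩
  have hN₀ : (0 : ℝ) < N := (exp_pos _).trans_le (Nat.ceil_le.1 hN)
  have hlog : K ^ 2 ≤ log N := (le_log_iff_exp_le hN₀).2 (Nat.ceil_le.1 hN)
  have hK : K ≤ √(log N) := le_sqrt_of_sq_le hlog
  obtain ⟨n, d, hD, hcard⟩ := exists_behrend_parameters_of_log_eq_sq hm hN₀
    (sq_sqrt ((sq_nonneg K).trans hlog)).symm (le_of_max_le_left hK) (le_of_max_le_right hK)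
  exact ⟨n, d, by exact_mod_cast hD, hcard⟩

/-- Behrend-type construction: for every t ≥ 3 there is a constant C such that
for all large N there is B ⊆ [N] with |B| ≥ N / exp(C·√(log N)) having no
nontrivial solution to y_1 + ⋯ + y_{t-1} = (t-1)·y_t. -/
theorem stmt_11 (t : ℕ) (ht : 3 ≤ t) :
    ∃ C : ℝ, ∃ N₀ : ℕ, ∀ N ≥ N₀, ∃ B : Finset ℕ,
      B ⊆ Finset.Icc 1 N ∧
      (N : ℝ) / Real.exp (C * Real.sqrt (Real.log N)) ≤ B.card ∧
      ∀ y : ℕ → ℕ, (∀ i < t, y i ∈ B) →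
        (∑ i ∈ Finset.range (t - 1), y i) = (t - 1) * y (t - 1) →
        ∀ i < t, ∀ j < t, y i = y j := by
  obtain ⟨m, rfl⟩ : ∃ m, t = m + 1 := ⟨t - 1, by omega⟩
  obtain ⟨C, N₀, hN₀⟩ := exists_behrend_parameters (m := m) (by omega)
  refine ⟨C, N₀, fun N hN => ?_⟩
  obtain ⟨n, d, hD, hcard⟩ := hN₀ N hN
  obtain ⟨k, hk⟩ := Behrend.exists_large_sphere n d
  have hdD : d ≤ m * d := Nat.le_mul_of_pos_left d (by omega)
  refine ⟨Behrend.sphereSet n d k (m * d),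
    (Behrend.sphereSet_subset_Icc hdD).trans (Icc_subset_Icc_right hD), ?_, ?_⟩
  · rw [Behrend.card_sphereSet hdD]
    exact hcard.trans hk
  · intro y hy hsum
    rw [Nat.add_sub_cancel] at hsum
    have hym : ∀ i < m + 1, y i = y m := fun i hi => (Nat.lt_succ_iff_lt_or_eq.1 hi).elim
      (Behrend.eq_of_mem_sphereSet_of_sum_eq le_rfl (fun i hi => hy i (by omega)) hsum i)
      (congrArg y)
    exact fun i hi j hj => (hym i hi).trans (hym j hj).symm
end

section
/- Fix s ≥ 3 and n, and identify each of s pairwise-disjoint sets V_1,…,V_s with [n]. Let B ⊆ [n/s] have no nontrivial solution to y_1 + y_2 = 2y_3 in B. For x = (x_1,…,x_{s-2}) ∈ [n/s]^{s-2} and y ∈ B, let K_{x,y} be the s-vertex set with i-th vertex x_i ∈ V_i for 1 ≤ i ≤ s-2, vertex y + x_1 + ⋯ + x_{s-2} ∈ V_{s-1}, and vertex 2y + x_1 + ⋯ + x_{s-2} ∈ V_s. Then the sets K_{x,y} are pairwise (s-1)-disjoint: any two distinct such sets agree in at most s-2 of the s parts. -/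
/-!
Two distinct sets `K_{x,y}` cannot agree in `s - 1` parts because any `s - 1` coordinates of
`K_{x,y}` determine `(x, y)`. If the missing coordinate is one of the `x_i`, the last two
coordinates `y + Σx` and `2y + Σx` give `y` and `Σx`, and `x_i` is recovered from the sum.
Otherwise all `x_i` are known, hence `Σx`, and either of the last two coordinates gives `y`.
-/

open Finset

theorem Finset.of_card_sub_one_le_card_filter {α : Type*} [DecidableEq α] {S : Finset α}
    {p : α → Prop} [DecidablePred p] (h : #S - 1 ≤ #(S.filter p)) {i j : α}
    (hi : i ∈ S) (hj : j ∈ S) (hji : j ≠ i) (hpi : ¬ p i) : p j := by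
  by_contra hpj
  have hj' : j ∈ S.erase i := mem_erase.mpr ⟨hji, hj⟩
  have hsub : S.filter p ⊆ (S.erase i).erase j := by
    intro k hk
    obtain ⟨hkS, hpk⟩ := mem_filter.mp hk
    exact mem_erase.mpr ⟨by rintro rfl; exact hpj hpk,
      mem_erase.mpr ⟨by rintro rfl; exact hpi hpk, hkS⟩⟩
  have hcard := card_le_card hsub
  rw [card_erase_of_mem hj', card_erase_of_mem hi] at hcard
  have := card_pos.mpr ⟨j, hj'⟩
  rw [card_erase_of_mem hi] at this
  omega

theorem Finset.apply_eq_of_sum_eq_of_eqOn_erase {ι M : Type*} [DecidableEq ι]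
    [AddCancelCommMonoid M] {S : Finset ι} {f g : ι → M} {i : ι} (hi : i ∈ S)
    (hfg : ∀ j ∈ S, j ≠ i → f j = g j) (hsum : ∑ j ∈ S, f j = ∑ j ∈ S, g j) : f i = g i := by
  rw [← add_sum_erase S f hi, ← add_sum_erase S g hi,
    sum_congr rfl fun j hj => hfg j (mem_of_mem_erase hj) (ne_of_mem_erase hj)] at hsum
  exact add_right_cancel hsum

/-- The vertex of `K_{x,y}` in the part `V_{i+1}`. -/
def vertexK (s : ℕ) (x : ℕ → ℕ) (y i : ℕ) : ℕ :=
  if i < s - 2 then x i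
  else if i = s - 2 then y + ∑ j ∈ range (s - 2), x j
  else 2 * y + ∑ j ∈ range (s - 2), x j

section vertexK

variable {s : ℕ} {x x' : ℕ → ℕ} {y y' : ℕ}

theorem vertexK_of_lt {i : ℕ} (hi : i < s - 2) : vertexK s x y i = x i := by
  simp [vertexK, hi]

theorem vertexK_sub_two : vertexK s x y (s - 2) = y + ∑ j ∈ range (s - 2), x j := by
  simp [vertexK]

theorem vertexK_sub_one (hs : 2 ≤ s) :
    vertexK s x y (s - 1) = 2 * y + ∑ j ∈ range (s - 2), x j := by
  simp [vertexK, show ¬ s - 1 < s - 2 by omega, show s - 1 ≠ s - 2 by omega]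

theorem eq_of_vertexK_agree (hs : 2 ≤ s)
    (hagree : s - 1 ≤ #((range s).filter fun i => vertexK s x y i = vertexK s x' y' i)) :
    (∀ i < s - 2, x i = x' i) ∧ y = y' := by
  have agree_off : ∀ i < s, vertexK s x y i ≠ vertexK s x' y' i →
      ∀ j < s, j ≠ i → vertexK s x y j = vertexK s x' y' j := fun i hi hne j hj hji =>
    of_card_sub_one_le_card_filter (p := fun k => vertexK s x y k = vertexK s x' y' k)
      (by rwa [card_range]) (mem_range.mpr hi) (mem_range.mpr hj) hji hne
  have hx : ∀ i < s - 2, x i = x' i := by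
    intro i hi
    by_contra hne
    have hrest := agree_off i (by omega) (by rwa [vertexK_of_lt hi, vertexK_of_lt hi])
    have h₂ := hrest (s - 2) (by omega) (by omega)
    have h₁ := hrest (s - 1) (by omega) (by omega)
    rw [vertexK_sub_two, vertexK_sub_two] at h₂
    rw [vertexK_sub_one hs, vertexK_sub_one hs] at h₁
    refine hne (apply_eq_of_sum_eq_of_eqOn_erase (mem_range.mpr hi) (fun j hj hji => ?_)
      (by omega))
    have hj := mem_range.mp hj
    simpa [vertexK_of_lt hj] using hrest j (by omega) hji
  have hsum : ∑ j ∈ range (s - 2), x j = ∑ j ∈ range (s - 2), x' j :=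
    sum_congr rfl fun j hj => hx j (mem_range.mp hj)
  refine ⟨hx, ?_⟩
  by_cases h₂ : vertexK s x y (s - 2) = vertexK s x' y' (s - 2)
  · rw [vertexK_sub_two, vertexK_sub_two] at h₂
    omega
  · have h₁ := agree_off (s - 2) (by omega) h₂ (s - 1) (by omega) (by omega)
    rw [vertexK_sub_one hs, vertexK_sub_one hs] at h₁
    omega

end vertexK

theorem stmt_12_general (s : ℕ) (hs : 3 ≤ s)
    (K : (ℕ → ℕ) → ℕ → ℕ → ℕ)
    (hK : ∀ x y i, K x y i =
      if i < s - 2 then x i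
      else if i = s - 2 then y + ∑ j ∈ Finset.range (s - 2), x j
      else 2 * y + ∑ j ∈ Finset.range (s - 2), x j)
    (x x' : ℕ → ℕ) (y y' : ℕ)
    (hagree : s - 1 ≤ ((Finset.range s).filter fun i => K x y i = K x' y' i).card) :
    (∀ i < s - 2, x i = x' i) ∧ y = y' := by
  obtain rfl : K = vertexK s := by
    funext x y i
    exact hK x y i
  exact eq_of_vertexK_agree (by omega) hagree

/-- The sets K_{x,y} (with i-th vertex x_i for i < s-2, then y + Σx_i, then
2y + Σx_i) are pairwise (s-1)-disjoint: if two of them agree in at least s-1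
of the s parts, then their parameters coincide. -/
theorem stmt_12 (s n : ℕ) (hs : 3 ≤ s) (B : Finset ℕ)
    (hB : B ⊆ Finset.Icc 1 (n / s))
    (hBsol : ∀ y₁ ∈ B, ∀ y₂ ∈ B, ∀ y₃ ∈ B, y₁ + y₂ = 2 * y₃ →
      y₁ = y₂ ∧ y₂ = y₃)
    (K : (ℕ → ℕ) → ℕ → ℕ → ℕ)
    (hK : ∀ x y i, K x y i =
      if i < s - 2 then x i
      else if i = s - 2 then y + ∑ j ∈ Finset.range (s - 2), x j
      else 2 * y + ∑ j ∈ Finset.range (s - 2), x j)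
    (x x' : ℕ → ℕ) (y y' : ℕ)
    (hx : ∀ i < s - 2, x i ∈ Finset.Icc 1 (n / s))
    (hx' : ∀ i < s - 2, x' i ∈ Finset.Icc 1 (n / s))
    (hy : y ∈ B) (hy' : y' ∈ B)
    (hagree : s - 1 ≤ ((Finset.range s).filter fun i => K x y i = K x' y' i).card) :
    (∀ i < s - 2, x i = x' i) ∧ y = y' :=
  stmt_12_general s hs K hK x x' y y' hagree
end

section
/- With the setup of the previous construction: let G be the s-partite (s-1)-uniform hypergraph on parts V_1,…,V_s (each a copy of [n]) whose edges are all (s-1)-element subsets of the sets K_{x,y} for x ∈ [n/s]^{s-2}, y ∈ B, where B ⊆ [n/s] has no nontrivial solution to y_1+y_2 = 2y_3. Then every canonical copy of K_s^{(s-1)} in G (vertices v_1 ∈ V_1, …, v_s ∈ V_s spanning all s possible (s-1)-edges) equals K_{x,y} for some x ∈ [n/s]^{s-2} and y ∈ B. In particular G has at most (n/s)^{s-2}·|B| ≤ n^{s-1} canonical copies of K_s^{(s-1)}. -/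
/-!
The copy `v` agrees with some `K_{x,y}` off its last vertex, with some `K_{x',y'}` off its
second-to-last vertex and with some `K_{x'',y''}` off its first vertex. The first two
force `Σ x = Σ x'`, so that `v_{s-1} - v_{s-2} = 2y' - y`, while the third gives
`v_{s-1} - v_{s-2} = y''`. Hence `y + y'' = 2y'` is a solution in `B`, which must be trivial,
and then `v = K_{x,y}`. For the count, the last vertex of any `K_{x,y}` is determined by the
others through `v_{s-1} + Σ_{i<s-2} v_i = 2 v_{s-2}`, so forgetting it is injective on
canonical copies.
-/

open Finset

/-- The `s`-set `K_{x,y}`, with part `V_{i+1}` indexed by `i`. -/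
def kxy (s : ℕ) (x : ℕ → ℕ) (y i : ℕ) : ℕ :=
  if i < s - 2 then x i
  else if i = s - 2 then y + ∑ j ∈ range (s - 2), x j
  else 2 * y + ∑ j ∈ range (s - 2), x j

section kxy

variable {s : ℕ} {x : ℕ → ℕ} {y : ℕ}

lemma kxy_of_lt {i : ℕ} (hi : i < s - 2) : kxy s x y i = x i := if_pos hi

lemma kxy_sub_two : kxy s x y (s - 2) = y + ∑ j ∈ range (s - 2), x j := by
  simp [kxy]

lemma kxy_sub_one (hs : 2 ≤ s) : kxy s x y (s - 1) = 2 * y + ∑ j ∈ range (s - 2), x j := by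
  rw [kxy, if_neg (by omega), if_neg (by omega)]

lemma kxy_sub_one_add_sum (hs : 2 ≤ s) :
    kxy s x y (s - 1) + ∑ j ∈ range (s - 2), kxy s x y j = 2 * kxy s x y (s - 2) := by
  rw [kxy_sub_one hs, kxy_sub_two, sum_congr rfl fun j hj => kxy_of_lt (mem_range.mp hj)]
  ring

end kxy

section Copies

variable {s : ℕ} {v : Fin s → ℕ}

lemma sum_eq_of_agree_on_lt {x x' : ℕ → ℕ} {y y' : ℕ}
    (h : ∀ i : Fin s, i.val < s - 2 → v i = kxy s x y i)
    (h' : ∀ i : Fin s, i.val < s - 2 → v i = kxy s x' y' i) :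
    ∑ j ∈ range (s - 2), x j = ∑ j ∈ range (s - 2), x' j := by
  refine sum_congr rfl fun j hj => ?_
  have hj : j < s - 2 := mem_range.mp hj
  rw [← kxy_of_lt (x := x) (y := y) hj, ← kxy_of_lt (x := x') (y := y') hj]
  exact (h ⟨j, by omega⟩ hj).symm.trans (h' ⟨j, by omega⟩ hj)

lemma add_eq_two_mul_of_agree (hs : 3 ≤ s) {x x' x'' : ℕ → ℕ} {y y' y'' : ℕ}
    (h₁ : ∀ i : Fin s, i.val ≠ s - 1 → v i = kxy s x y i)
    (h₂ : ∀ i : Fin s, i.val ≠ s - 2 → v i = kxy s x' y' i)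
    (h₃ : ∀ i : Fin s, i.val ≠ 0 → v i = kxy s x'' y'' i) :
    y + y'' = 2 * y' := by
  have hsum := sum_eq_of_agree_on_lt (fun i hi => h₁ i (by omega)) (fun i hi => h₂ i (by omega))
  have e₁ := h₁ ⟨s - 2, by omega⟩ (by simp; omega)
  have e₂ := h₂ ⟨s - 1, by omega⟩ (by simp; omega)
  have e₃ := h₃ ⟨s - 2, by omega⟩ (by simp; omega)
  have e₄ := h₃ ⟨s - 1, by omega⟩ (by simp; omega)
  simp only [kxy_sub_two, kxy_sub_one (show 2 ≤ s by omega)] at e₁ e₂ e₃ e₄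
  omega

lemma eq_kxy_of_agree (hs : 3 ≤ s) {x x' : ℕ → ℕ} {y : ℕ}
    (h₁ : ∀ i : Fin s, i.val ≠ s - 1 → v i = kxy s x y i)
    (h₂ : ∀ i : Fin s, i.val ≠ s - 2 → v i = kxy s x' y i) (i : Fin s) :
    v i = kxy s x y i := by
  by_cases hi : i.val = s - 1
  · have hsum :=
      sum_eq_of_agree_on_lt (fun i hi => h₁ i (by omega)) (fun i hi => h₂ i (by omega))
    rw [h₂ i (by omega), hi, kxy_sub_one (by omega), kxy_sub_one (by omega), hsum]
  · exact h₁ i hi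

theorem exists_kxy_of_forall_agree (hs : 3 ≤ s) {P : (ℕ → ℕ) → Prop} {B : Set ℕ}
    (hB : ThreeAPFree B)
    (hv : ∀ j : Fin s, ∃ x, P x ∧ ∃ y ∈ B, ∀ i : Fin s, i ≠ j → v i = kxy s x y i) :
    ∃ x, P x ∧ ∃ y ∈ B, ∀ i : Fin s, v i = kxy s x y i := by
  have ne_of_val_ne {i : Fin s} {a : ℕ} (ha : a < s) (h : i.val ≠ a) : i ≠ ⟨a, ha⟩ :=
    Fin.ne_of_val_ne h
  obtain ⟨x, hx, y, hy, h₁⟩ := hv ⟨s - 1, by omega⟩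
  obtain ⟨x', -, y', hy', h₂⟩ := hv ⟨s - 2, by omega⟩
  obtain ⟨x'', -, y'', hy'', h₃⟩ := hv ⟨0, by omega⟩
  replace h₁ i hi := h₁ i (ne_of_val_ne _ hi)
  replace h₂ i hi := h₂ i (ne_of_val_ne _ hi)
  replace h₃ i hi := h₃ i (ne_of_val_ne _ hi)
  have hyy' : y = y' := hB hy hy' hy'' (by rw [add_eq_two_mul_of_agree hs h₁ h₂ h₃, two_mul])
  subst hyy'
  exact ⟨x, hx, y, hy, eq_kxy_of_agree hs h₁ h₂⟩

lemma injOn_restrict_of_eq_kxy (hs : 2 ≤ s) :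
    Set.InjOn (fun (v : Fin s → ℕ) (i : Fin (s - 1)) => v (Fin.castLE (Nat.sub_le s 1) i))
      {v | ∃ x y, ∀ i : Fin s, v i = kxy s x y i} := by
  rintro v ⟨x, y, hv⟩ v' ⟨x', y', hv'⟩ h
  have hlt (i : Fin s) (hi : i.val < s - 1) : v i = v' i := congr_fun h ⟨i, hi⟩
  funext i
  by_cases hi : i.val < s - 1
  · exact hlt i hi
  have hsum : ∑ j ∈ range (s - 2), kxy s x y j = ∑ j ∈ range (s - 2), kxy s x' y' j :=
    sum_congr rfl fun j hj => by
      have hj : j < s - 2 := mem_range.mp hj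
      rw [← hv ⟨j, by omega⟩, ← hv' ⟨j, by omega⟩, hlt _ (by simp; omega)]
  have hpen : kxy s x y (s - 2) = kxy s x' y' (s - 2) := by
    rw [← hv ⟨s - 2, by omega⟩, ← hv' ⟨s - 2, by omega⟩, hlt _ (by simp; omega)]
  have := kxy_sub_one_add_sum (x := x) (y := y) hs
  have := kxy_sub_one_add_sum (x := x') (y := y') hs
  rw [hv, hv', show i.val = s - 1 by omega]
  omega

end Copies

theorem stmt_13_general (s n : ℕ) (hs : 3 ≤ s) (B : Finset ℕ)
    (hBsol : ∀ y₁ ∈ B, ∀ y₂ ∈ B, ∀ y₃ ∈ B, y₁ + y₂ = 2 * y₃ →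
      y₁ = y₂ ∧ y₂ = y₃)
    (K : (ℕ → ℕ) → ℕ → ℕ → ℕ)
    (hK : ∀ x y i, K x y i =
      if i < s - 2 then x i
      else if i = s - 2 then y + ∑ j ∈ Finset.range (s - 2), x j
      else 2 * y + ∑ j ∈ Finset.range (s - 2), x j) :
    (∀ v : Fin s → ℕ, (∀ i, v i ∈ Finset.Icc 1 n) →
      (∀ j : Fin s, ∃ x : ℕ → ℕ, (∀ i < s - 2, x i ∈ Finset.Icc 1 (n / s)) ∧
        ∃ y ∈ B, ∀ i : Fin s, i ≠ j → v i = K x y i.val) →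
      ∃ x : ℕ → ℕ, (∀ i < s - 2, x i ∈ Finset.Icc 1 (n / s)) ∧
        ∃ y ∈ B, ∀ i : Fin s, v i = K x y i.val) ∧
    Set.ncard {v : Fin s → ℕ | (∀ i, v i ∈ Finset.Icc 1 n) ∧
      ∀ j : Fin s, ∃ x : ℕ → ℕ, (∀ i < s - 2, x i ∈ Finset.Icc 1 (n / s)) ∧
        ∃ y ∈ B, ∀ i : Fin s, i ≠ j → v i = K x y i.val} ≤ n ^ (s - 1) := by
  obtain rfl : K = kxy s := funext₃ hK
  have hB : ThreeAPFree (B : Set ℕ) := fun a ha b hb c hc habc =>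
    have ⟨hac, hcb⟩ := hBsol a ha c hc b hb (by omega)
    hac.trans hcb
  refine ⟨fun v _ hv => exists_kxy_of_forall_agree hs hB hv, ?_⟩
  refine (Set.ncard_le_ncard_of_injOn (t := Fintype.piFinset fun _ : Fin (s - 1) => Icc 1 n)
    _ (fun v hv => Fintype.mem_piFinset.mpr fun i => hv.1 _)
    ((injOn_restrict_of_eq_kxy (by omega)).mono fun v hv => ?_)).trans_eq ?_
  · obtain ⟨x, -, y, -, hxy⟩ := exists_kxy_of_forall_agree hs hB hv.2
    exact ⟨x, y, hxy⟩
  · rw [Set.ncard_coe_finset, Fintype.card_piFinset_const, Nat.card_Icc, Nat.add_sub_cancel]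

/-- In the (s-1)-uniform s-partite hypergraph G whose edges are the
(s-1)-subsets of the sets K_{x,y}, every canonical copy of K_s^{(s-1)}
(a transversal v spanning all s possible (s-1)-edges) equals some K_{x,y};
in particular there are at most n^{s-1} canonical copies of K_s^{(s-1)}. -/
theorem stmt_13 (s n : ℕ) (hs : 3 ≤ s) (B : Finset ℕ)
    (hB : B ⊆ Finset.Icc 1 (n / s))
    (hBsol : ∀ y₁ ∈ B, ∀ y₂ ∈ B, ∀ y₃ ∈ B, y₁ + y₂ = 2 * y₃ →
      y₁ = y₂ ∧ y₂ = y₃)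
    (K : (ℕ → ℕ) → ℕ → ℕ → ℕ)
    (hK : ∀ x y i, K x y i =
      if i < s - 2 then x i
      else if i = s - 2 then y + ∑ j ∈ Finset.range (s - 2), x j
      else 2 * y + ∑ j ∈ Finset.range (s - 2), x j) :
    (∀ v : Fin s → ℕ, (∀ i, v i ∈ Finset.Icc 1 n) →
      (∀ j : Fin s, ∃ x : ℕ → ℕ, (∀ i < s - 2, x i ∈ Finset.Icc 1 (n / s)) ∧
        ∃ y ∈ B, ∀ i : Fin s, i ≠ j → v i = K x y i.val) →
      ∃ x : ℕ → ℕ, (∀ i < s - 2, x i ∈ Finset.Icc 1 (n / s)) ∧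
        ∃ y ∈ B, ∀ i : Fin s, v i = K x y i.val) ∧
    Set.ncard {v : Fin s → ℕ | (∀ i, v i ∈ Finset.Icc 1 n) ∧
      ∀ j : Fin s, ∃ x : ℕ → ℕ, (∀ i < s - 2, x i ∈ Finset.Icc 1 (n / s)) ∧
        ∃ y ∈ B, ∀ i : Fin s, i ≠ j → v i = K x y i.val} ≤ n ^ (s - 1) :=
  stmt_13_general s n hs B hBsol K hK
end

section
/- Let S be a graph on [s] with a cycle (1,2,…,t,1), t ≥ 3. Let B ⊆ [n/s] have no nontrivial solution to y_1 + ⋯ + y_{t-1} = (t-1)y_t, and let G be the s-partite graph whose edges are exactly the pairs {v_i, v_j} (v_i ∈ V_i, v_j ∈ V_j, {i,j} ∈ E(S)) arising from the canonical copies S_{x,y} (vertex x + (i-1)y in V_i) over x ∈ [n/s], y ∈ B. Then for every canonical copy v_1 ∈ V_1,…,v_s ∈ V_s of S in G there exist x ∈ [n/s] and y ∈ B with v_i = x + (i-1)y for all 1 ≤ i ≤ t. In particular, G has at most (n/s)·|B|·n^{s-t} ≤ n^{s-1} canonical copies of S. -/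
/-!
Along the cycle `0, 1, …, t-1, 0` every edge `{a, a+1}` of a canonical copy comes from some
`S_{x,y}`, so the copy advances by a step `y_a ∈ B`; the closing edge `{t-1, 0}` comes from one
`S_{x,y_t}`, whence the steps sum to `(t-1) y_t`. This is a solution of
`y_1 + ⋯ + y_{t-1} = (t-1) y_t` in `B`, so it is trivial: all steps are equal and the copy is
`x + i y` on the cycle. In particular a copy is determined by all its vertices but the third,
which is `2 v₁ - v₀`; this gives the count `n ^ (s - 1)`.
-/

open Finset

theorem eq_add_sum_range_of_succ_eq {M : Type*} [AddCommMonoid M] {t : ℕ} {w d : ℕ → M}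
    (h : ∀ a, a + 1 < t → w (a + 1) = w a + d a) :
    ∀ a < t, w a = w 0 + ∑ i ∈ range a, d i := by
  intro a
  induction a with
  | zero => simp
  | succ a ih =>
    intro ha
    rw [sum_range_succ, ← add_assoc, ← ih (by omega), h a ha]

theorem exists_eq_add_mul_of_steps {B : Finset ℕ} {t : ℕ}
    (hBsol : ∀ y : ℕ → ℕ, (∀ i < t, y i ∈ B) →
      (∑ i ∈ range (t - 1), y i) = (t - 1) * y (t - 1) →
      ∀ i < t, ∀ j < t, y i = y j)
    {w : ℕ → ℕ} (hstep : ∀ a, a + 1 < t → ∃ y ∈ B, w (a + 1) = w a + y)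
    (hclose : ∃ y ∈ B, w (t - 1) = w 0 + (t - 1) * y) :
    ∃ y ∈ B, ∀ i < t, w i = w 0 + i * y := by
  choose! d hdB hd using hstep
  obtain ⟨yt, hyt, hclose⟩ := hclose
  set Y : ℕ → ℕ := fun a => if a + 1 < t then d a else yt with hY
  have hYB : ∀ i < t, Y i ∈ B := by
    intro i _
    by_cases h : i + 1 < t
    · simpa [hY, h] using hdB i h
    · simpa [hY, h] using hyt
  have htele : ∀ a < t, w a = w 0 + ∑ i ∈ range a, Y i :=
    eq_add_sum_range_of_succ_eq fun a ha => by simpa [hY, ha] using hd a ha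
  have hYlast : Y (t - 1) = yt := if_neg (by omega)
  by_cases ht : t = 0
  · exact ⟨yt, hyt, fun i hi => by omega⟩
  have hsum : ∑ i ∈ range (t - 1), Y i = (t - 1) * Y (t - 1) := by
    have := htele (t - 1) (by omega)
    rw [hYlast]
    omega
  have hconst : ∀ i < t, Y i = yt := fun i hi =>
    (hBsol Y hYB hsum i hi (t - 1) (by omega)).trans hYlast
  refine ⟨yt, hyt, fun i hi => ?_⟩
  rw [htele i hi, sum_congr rfl fun j hj => hconst j ((mem_range.1 hj).trans hi),
    sum_const, card_range, smul_eq_mul]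

theorem Fin.injOn_removeNth_of_apply_eq {α : Type*} {m : ℕ} (p : Fin (m + 1))
    (f : (Fin m → α) → α) :
    Set.InjOn p.removeNth {v : Fin (m + 1) → α | v p = f (p.removeNth v)} := by
  intro v hv v' hv' h
  rw [← Fin.insertNth_self_removeNth p v, ← Fin.insertNth_self_removeNth p v', h,
    hv, hv', h]

theorem ncard_le_pow_of_injOn_removeNth {m n : ℕ} (p : Fin (m + 1))
    {A : Set (Fin (m + 1) → ℕ)} (hA : ∀ v ∈ A, ∀ i, v i ∈ Icc 1 n)
    (hinj : Set.InjOn p.removeNth A) :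
    A.ncard ≤ n ^ m := by
  have hmaps : p.removeNth '' A ⊆ Fintype.piFinset fun _ : Fin m => Icc 1 n := by
    rintro - ⟨v, hv, rfl⟩
    exact Fintype.mem_piFinset.2 fun i => hA v hv _
  calc A.ncard = (p.removeNth '' A).ncard := hinj.ncard_image.symm
    _ ≤ (Fintype.piFinset fun _ : Fin m => Icc 1 n : Set (Fin m → ℕ)).ncard :=
      Set.ncard_le_ncard hmaps (Finset.finite_toSet _)
    _ = n ^ m := by rw [Set.ncard_coe_finset, Fintype.card_piFinset_const, Nat.card_Icc,
      Nat.add_sub_cancel]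

theorem exists_eq_add_mul_of_canonical_copy {s n t : ℕ} {S : SimpleGraph ℕ} {B : Finset ℕ}
    {G : SimpleGraph (ℕ × ℕ)} (hS : ∀ i j, S.Adj i j → i < s ∧ j < s)
    (hcyc1 : ∀ a : ℕ, a + 1 < t → S.Adj a (a + 1)) (hcyc2 : S.Adj (t - 1) 0)
    (hBsol : ∀ y : ℕ → ℕ, (∀ i < t, y i ∈ B) →
      (∑ i ∈ range (t - 1), y i) = (t - 1) * y (t - 1) →
      ∀ i < t, ∀ j < t, y i = y j)
    (hG : ∀ p q : ℕ × ℕ, G.Adj p q ↔ (S.Adj p.1 q.1 ∧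
      ∃ x ∈ Icc 1 (n / s), ∃ y ∈ B, p.2 = x + p.1 * y ∧ q.2 = x + q.1 * y))
    {v : Fin s → ℕ} (hadj : ∀ i j : Fin s, S.Adj i.val j.val → G.Adj (i.val, v i) (j.val, v j)) :
    ∃ x ∈ Icc 1 (n / s), ∃ y ∈ B, ∀ i : Fin s, i.val < t → v i = x + i.val * y := by
  set w : ℕ → ℕ := fun a => if h : a < s then v ⟨a, h⟩ else 0
  have hw : ∀ i : Fin s, w i = v i := fun i => dif_pos i.isLt
  have hedge : ∀ a b, S.Adj a b →
      ∃ x ∈ Icc 1 (n / s), ∃ y ∈ B, w a = x + a * y ∧ w b = x + b * y := by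
    intro a b hab
    obtain ⟨ha, hb⟩ := hS a b hab
    obtain ⟨-, x, hx, y, hy, hxa, hxb⟩ := (hG _ _).1 (hadj ⟨a, ha⟩ ⟨b, hb⟩ hab)
    exact ⟨x, hx, y, hy, (hw ⟨a, ha⟩).trans hxa, (hw ⟨b, hb⟩).trans hxb⟩
  obtain ⟨x, hx, yt, hyt, hlast, hfirst⟩ := hedge _ _ hcyc2
  rw [zero_mul, add_zero] at hfirst
  obtain ⟨y, hy, hwy⟩ := exists_eq_add_mul_of_steps hBsol (w := w)
    (fun a ha => by
      obtain ⟨x, -, y, hy, hxa, hxb⟩ := hedge _ _ (hcyc1 a ha)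
      exact ⟨y, hy, by rw [hxa, hxb]; ring⟩)
    ⟨yt, hyt, by rw [hlast, hfirst]⟩
  exact ⟨x, hx, y, hy, fun i hi => by rw [← hw, hwy i hi, hfirst]⟩

theorem stmt_16_general (t s n : ℕ) (ht : 3 ≤ t)
    (S : SimpleGraph ℕ) (hS : ∀ i j, S.Adj i j → i < s ∧ j < s)
    (hcyc1 : ∀ a : ℕ, a + 1 < t → S.Adj a (a + 1)) (hcyc2 : S.Adj (t - 1) 0)
    (B : Finset ℕ)
    (hBsol : ∀ y : ℕ → ℕ, (∀ i < t, y i ∈ B) →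
      (∑ i ∈ Finset.range (t - 1), y i) = (t - 1) * y (t - 1) →
      ∀ i < t, ∀ j < t, y i = y j)
    (G : SimpleGraph (ℕ × ℕ))
    (hG : ∀ p q : ℕ × ℕ, G.Adj p q ↔ (S.Adj p.1 q.1 ∧
      ∃ x ∈ Finset.Icc 1 (n / s), ∃ y ∈ B,
        p.2 = x + p.1 * y ∧ q.2 = x + q.1 * y)) :
    (∀ v : Fin s → ℕ, (∀ i, v i ∈ Finset.Icc 1 n) →
      (∀ i j : Fin s, S.Adj i.val j.val → G.Adj (i.val, v i) (j.val, v j)) →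
      ∃ x ∈ Finset.Icc 1 (n / s), ∃ y ∈ B, ∀ i : Fin s, i.val < t →
        v i = x + i.val * y) ∧
    Set.ncard {v : Fin s → ℕ | (∀ i, v i ∈ Finset.Icc 1 n) ∧
      ∀ i j : Fin s, S.Adj i.val j.val → G.Adj (i.val, v i) (j.val, v j)}
      ≤ n ^ (s - 1) := by
  have hprog := fun v => exists_eq_add_mul_of_canonical_copy (v := v) hS hcyc1 hcyc2 hBsol hG
  refine ⟨fun v _ => hprog v, ?_⟩
  obtain ⟨m, rfl⟩ : ∃ m, s = m + 3 := ⟨s - 3, by have := (hS _ _ (hcyc1 1 (by omega))).2; omega⟩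
  have hthird : ∀ v : Fin (m + 3) → ℕ,
      (∀ i j : Fin (m + 3), S.Adj i.val j.val → G.Adj (i.val, v i) (j.val, v j)) →
      v 2 = 2 * v 1 - v 0 := by
    intro v hv
    obtain ⟨x, -, y, -, hxy⟩ := hprog v hv
    have hval2 : ((2 : Fin (m + 3)) : ℕ) = 2 := by simp
    rw [hxy 0 (by rw [Fin.val_zero]; omega), hxy 1 (by rw [Fin.val_one]; omega),
      hxy 2 (by rw [hval2]; omega), Fin.val_zero, Fin.val_one, hval2]
    omega
  refine ncard_le_pow_of_injOn_removeNth 2 (fun v hv => hv.1) fun v hv v' hv' =>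
    Fin.injOn_removeNth_of_apply_eq 2 (fun u => 2 * u 1 - u 0) (hthird v hv.2) (hthird v' hv'.2)

/-- Let S be a graph on [s] with the cycle (0,1,…,t-1,0), t ≥ 3, and let G be
the s-partite graph whose edges are exactly the pairs {(i, x + i·y), (j, x + j·y)}
with {i,j} ∈ E(S), x ∈ [n/s], y ∈ B, where B has no nontrivial solution to
y_1 + ⋯ + y_{t-1} = (t-1)y_t. Then every canonical copy v of S in G satisfies
v i = x + i·y on the cycle coordinates for some x ∈ [n/s], y ∈ B; in
particular G has at most n^{s-1} canonical copies of S. -/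
theorem stmt_16 (t s n : ℕ) (ht : 3 ≤ t) (hts : t ≤ s)
    (S : SimpleGraph ℕ) (hS : ∀ i j, S.Adj i j → i < s ∧ j < s)
    (hcyc1 : ∀ a : ℕ, a + 1 < t → S.Adj a (a + 1)) (hcyc2 : S.Adj (t - 1) 0)
    (B : Finset ℕ) (hB : B ⊆ Finset.Icc 1 (n / s))
    (hBsol : ∀ y : ℕ → ℕ, (∀ i < t, y i ∈ B) →
      (∑ i ∈ Finset.range (t - 1), y i) = (t - 1) * y (t - 1) →
      ∀ i < t, ∀ j < t, y i = y j)
    (G : SimpleGraph (ℕ × ℕ))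
    (hG : ∀ p q : ℕ × ℕ, G.Adj p q ↔ (S.Adj p.1 q.1 ∧
      ∃ x ∈ Finset.Icc 1 (n / s), ∃ y ∈ B,
        p.2 = x + p.1 * y ∧ q.2 = x + q.1 * y)) :
    (∀ v : Fin s → ℕ, (∀ i, v i ∈ Finset.Icc 1 n) →
      (∀ i j : Fin s, S.Adj i.val j.val → G.Adj (i.val, v i) (j.val, v j)) →
      ∃ x ∈ Finset.Icc 1 (n / s), ∃ y ∈ B, ∀ i : Fin s, i.val < t →
        v i = x + i.val * y) ∧
    Set.ncard {v : Fin s → ℕ | (∀ i, v i ∈ Finset.Icc 1 n) ∧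
      ∀ i j : Fin s, S.Adj i.val j.val → G.Adj (i.val, v i) (j.val, v j)}
      ≤ n ^ (s - 1) :=
  stmt_16_general t s n ht S hS hcyc1 hcyc2 B hBsol G hG
end

section
/- Let F be a k-uniform hypergraph with no isolated vertices, H a k-uniform hypergraph, and let G be the b-blowup of H with natural homomorphism ψ: G → H. Suppose φ: H → F is a homomorphism and F is a core. Then for every copy F* of F in G, the image ψ(F*) is a copy of F in H; that is, ψ restricted to V(F*) is injective and maps the edges of F* to the edges of a subgraph of H isomorphic to F. -/
/-!
Composing the copy `ι` of `F` in the blowup with the projection `ψ` and with `φ : H → F` gives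
an endomorphism `g` of `F`. Since `F` is a core, `g` maps `E(F)` onto itself, so, as `F` has no
isolated vertices, `g` is surjective on the finitely many vertices of `F`, hence injective; so is
its first factor `ψ ∘ ι`.
-/

namespace Finset

variable {V : Type*} [DecidableEq V] {E : Finset (Finset V)}

theorem finite_of_forall_exists_mem (hcover : ∀ v : V, ∃ e ∈ E, v ∈ e) : Finite V := by
  refine Set.finite_univ_iff.mp ((E.biUnion id).finite_toSet.subset fun v _ => ?_)
  obtain ⟨e, he, hv⟩ := hcover v
  exact mem_biUnion.mpr ⟨e, he, hv⟩

theorem image_image_eq_of_isCore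
    (hcore : ∀ E' ⊆ E, (∃ ψ : V → V, ∀ e ∈ E, e.image ψ ∈ E') → E' = E)
    {g : V → V} (hg : ∀ e ∈ E, e.image g ∈ E) :
    E.image (fun e => e.image g) = E :=
  hcore _ (fun _ hf => by obtain ⟨e, he, rfl⟩ := mem_image.mp hf; exact hg e he)
    ⟨g, fun e he => mem_image_of_mem _ he⟩

theorem surjective_of_image_image_eq (hcover : ∀ v : V, ∃ e ∈ E, v ∈ e) {g : V → V}
    (hE : E.image (fun e => e.image g) = E) : Function.Surjective g := by
  intro v
  obtain ⟨e, he, hv⟩ := hcover v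
  rw [← hE, mem_image] at he
  obtain ⟨f, -, rfl⟩ := he
  obtain ⟨u, -, hu⟩ := mem_image.mp hv
  exact ⟨u, hu⟩

theorem injective_of_isCore (hcover : ∀ v : V, ∃ e ∈ E, v ∈ e)
    (hcore : ∀ E' ⊆ E, (∃ ψ : V → V, ∀ e ∈ E, e.image ψ ∈ E') → E' = E)
    {g : V → V} (hg : ∀ e ∈ E, e.image g ∈ E) : Function.Injective g :=
  have := finite_of_forall_exists_mem hcover
  Finite.injective_iff_surjective.mpr <|
    surjective_of_image_image_eq hcover (image_image_eq_of_isCore hcore hg)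

end Finset

theorem stmt_17_general {VF VH : Type*} [DecidableEq VF] [DecidableEq VH] (k b : ℕ)
    (EF : Finset (Finset VF)) (EH : Finset (Finset VH))
    (hnoiso : ∀ v : VF, ∃ e ∈ EF, v ∈ e)
    (hcore : ∀ E' ⊆ EF, (∃ ψ : VF → VF, ∀ e ∈ EF, e.image ψ ∈ E') → E' = EF)
    (φ : VH → VF) (hφ : ∀ e ∈ EH, e.image φ ∈ EF)
    (EG : Finset (Finset (VH × Fin b)))
    (hEG : ∀ e : Finset (VH × Fin b),
      e ∈ EG ↔ (e.card = k ∧ e.image Prod.fst ∈ EH))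
    (ι : VF → VH × Fin b)
    (hcopy : ∀ e ∈ EF, e.image ι ∈ EG) :
    Function.Injective (fun v => (ι v).1) ∧
      ∀ e ∈ EF, e.image (fun v => (ι v).1) ∈ EH := by
  have hproj : ∀ e ∈ EF, e.image (fun v => (ι v).1) ∈ EH := fun e he => by
    simpa only [Finset.image_image, Function.comp_def] using ((hEG _).mp (hcopy e he)).2
  have hendo : ∀ e ∈ EF, e.image (φ ∘ fun v => (ι v).1) ∈ EF := fun e he => by
    simpa only [Finset.image_image, Function.comp_def] using hφ _ (hproj e he)
  exact ⟨(Finset.injective_of_isCore hnoiso hcore hendo).of_comp, hproj⟩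

/-- Let F be a core k-graph with no isolated vertices, H a k-graph, G the
b-blowup of H (vertices V(H) × Fin b, natural homomorphism = first projection),
and φ : H → F a homomorphism. Then for every copy F* of F in G (an injective
ι : V(F) → V(G) sending edges of F to edges of G), the projection is injective
on V(F*) and maps the edges of F* to edges of H, i.e. ψ(F*) is a copy of F
in H. -/
theorem stmt_17 {VF VH : Type*} [DecidableEq VF] [DecidableEq VH] (k b : ℕ)
    (EF : Finset (Finset VF)) (EH : Finset (Finset VH))
    (huF : ∀ e ∈ EF, e.card = k) (huH : ∀ e ∈ EH, e.card = k)
    (hnoiso : ∀ v : VF, ∃ e ∈ EF, v ∈ e)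
    (hcore : ∀ E' ⊆ EF, (∃ ψ : VF → VF, ∀ e ∈ EF, e.image ψ ∈ E') → E' = EF)
    (φ : VH → VF) (hφ : ∀ e ∈ EH, e.image φ ∈ EF)
    (EG : Finset (Finset (VH × Fin b)))
    (hEG : ∀ e : Finset (VH × Fin b),
      e ∈ EG ↔ (e.card = k ∧ e.image Prod.fst ∈ EH))
    (ι : VF → VH × Fin b) (hι : Function.Injective ι)
    (hcopy : ∀ e ∈ EF, e.image ι ∈ EG) :
    Function.Injective (fun v => (ι v).1) ∧
      ∀ e ∈ EF, e.image (fun v => (ι v).1) ∈ EH :=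
  stmt_17_general k b EF EH hnoiso hcore φ hφ EG hEG ι hcopy
end
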